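/- arXiv:2512.17709 — 7 statements merged into one kernel-verified Lean document; each statement's English description precedes it below -/
import Mathlib

section
/- For every real number c1 with 0 ≤ c1 ≤ 1/2, one has (√(c1(c1+4)) − c1)/2 − c1 ≤ 3 − 2√2, with equality if and only if c1 = (3√2)/2 − 2. -/
open Real

/-! The function `c ↦ √(c (c + 4))` is concave on `c ≥ 0`, and the line `c ↦ 6 - 4√2 + 3c` is its
tangent at `c₀ = 3√2/2 - 2`: the square of the line exceeds `c (c + 4)` by exactly `8 (c - c₀)²`.
Since `(√(c (c + 4)) - c)/2 - c = (3 - 2√2) + (√(c (c + 4)) - (6 - 4√2 + 3c))/2`, the bound and its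
equality case are the statement that the curve lies below its tangent, touching it only at `c₀`. -/

lemma sq_tangent_sub (c : ℝ) :
    (6 - 4 * √2 + 3 * c) ^ 2 - c * (c + 4) = 8 * (c - (3 * √2 / 2 - 2)) ^ 2 := by
  linear_combination (-2 : ℝ) * sq_sqrt (show (0 : ℝ) ≤ 2 by norm_num)

lemma tangent_nonneg {c : ℝ} (hc : 0 ≤ c) : 0 ≤ 6 - 4 * √2 + 3 * c := by
  have : √2 ≤ 3 / 2 := sqrt_le_iff.mpr ⟨by norm_num, by norm_num⟩
  linarith

lemma sqrt_le_tangent {c : ℝ} (hc : 0 ≤ c) : √(c * (c + 4)) ≤ 6 - 4 * √2 + 3 * c := by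
  refine sqrt_le_iff.mpr ⟨tangent_nonneg hc, ?_⟩
  nlinarith [sq_tangent_sub c, sq_nonneg (c - (3 * √2 / 2 - 2))]

lemma sqrt_eq_tangent_iff {c : ℝ} (hc : 0 ≤ c) :
    √(c * (c + 4)) = 6 - 4 * √2 + 3 * c ↔ c = 3 * √2 / 2 - 2 := by
  have hpos : 0 ≤ c * (c + 4) := by positivity
  rw [sqrt_eq_iff_eq_sq hpos (tangent_nonneg hc), eq_comm, ← sub_eq_zero, sq_tangent_sub]
  simp [sub_eq_zero]

theorem stmt6_general (c1 : ℝ) (h1 : 0 ≤ c1) :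
    (Real.sqrt (c1 * (c1 + 4)) - c1) / 2 - c1 ≤ 3 - 2 * Real.sqrt 2 ∧
    ((Real.sqrt (c1 * (c1 + 4)) - c1) / 2 - c1 = 3 - 2 * Real.sqrt 2 ↔
      c1 = 3 * Real.sqrt 2 / 2 - 2) := by
  refine ⟨by linarith [sqrt_le_tangent h1], ?_⟩
  rw [← sqrt_eq_tangent_iff h1]
  constructor <;> intro h <;> linarith

theorem stmt6 (c1 : ℝ) (h1 : 0 ≤ c1) (h2 : c1 ≤ 1 / 2) :
    (Real.sqrt (c1 * (c1 + 4)) - c1) / 2 - c1 ≤ 3 - 2 * Real.sqrt 2 ∧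
    ((Real.sqrt (c1 * (c1 + 4)) - c1) / 2 - c1 = 3 - 2 * Real.sqrt 2 ↔
      c1 = 3 * Real.sqrt 2 / 2 - 2) :=
  stmt6_general c1 h1
end

section
/- Suppose the pair of degree sequences (D1, D2) is bigraphic, and let D1' be obtained from D1 by decreasing one entry d_j of D1 by 1 and increasing another entry d_i of D1 by 1, where d_i < d_j. Then (D1', D2) is also bigraphic. -/
/-!
If `a` has smaller degree than `b`, some neighbour `v` of `b` is not a neighbour of `a`.
Replacing the edge `bv` by `av` raises the degree of `a` by one, lowers that of `b` by one and
leaves every other degree, in particular every degree on the other side, unchanged.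
-/

/-- A pair of degree sequences (given as multisets) is *bigraphic* if there is a simple
bipartite graph (encoded as its set of edges between the two vertex classes) whose
degree multisets on the two sides are exactly `D1` and `D2`. -/
def BigraphicM (D1 D2 : Multiset ℕ) : Prop :=
  ∃ E : Finset (Fin (Multiset.card D1) × Fin (Multiset.card D2)),
    D1 = Finset.univ.val.map (fun u => (E.filter (fun p => p.1 = u)).card) ∧
    D2 = Finset.univ.val.map (fun v => (E.filter (fun p => p.2 = v)).card)

theorem Finset.exists_mem_of_val_map_eq_cons_cons {α γ : Type*} [DecidableEq α] {s : Finset α}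
    {f : α → γ} {x y : γ} {t : Multiset γ} (h : s.val.map f = x ::ₘ y ::ₘ t) :
    ∃ a ∈ s, ∃ b ∈ s.erase a, f a = x ∧ f b = y ∧ ((s.erase a).erase b).val.map f = t := by
  obtain ⟨a, ha, hfa, hrest⟩ := (Multiset.map_eq_cons _ _ _ _).mpr h
  obtain ⟨b, hb, hfb, ht⟩ := (Multiset.map_eq_cons _ _ _ _).mpr hrest
  exact ⟨a, ha, b, hb, hfa, hfb, ht⟩

theorem Finset.val_map_eq_cons_cons {α γ : Type*} [DecidableEq α] {s : Finset α} {a b : α}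
    (ha : a ∈ s) (hb : b ∈ s.erase a) (f : α → γ) :
    s.val.map f = f a ::ₘ f b ::ₘ ((s.erase a).erase b).val.map f := by
  rw [← Multiset.map_cons, ← Multiset.map_cons, Finset.erase_val, Finset.erase_val,
    Multiset.cons_erase (Finset.erase_val s a ▸ hb), Multiset.cons_erase ha]

section EdgeMove

variable {α β : Type*} [DecidableEq α] {E : Finset (α × β)} {a b : α} {v : β}

theorem exists_mem_notMem_of_card_filter_fst_lt
    (h : (E.filter (fun p => p.1 = a)).card < (E.filter (fun p => p.1 = b)).card) :
    ∃ v, (b, v) ∈ E ∧ (a, v) ∉ E := by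
  by_contra! hsub
  refine h.not_ge (Finset.card_le_card_of_injOn (fun p => (a, p.2)) ?_ ?_)
  · intro p hp
    obtain ⟨hpE, rfl⟩ := Finset.mem_filter.mp hp
    exact Finset.mem_filter.mpr ⟨hsub p.2 hpE, rfl⟩
  · intro p hp q hq hpq
    rw [Finset.coe_filter] at hp hq
    exact Prod.ext (hp.2.trans hq.2.symm) (congrArg Prod.snd hpq :)

variable [DecidableEq β]

theorem card_filter_fst_insert_erase_of_ne {u : α} (hua : u ≠ a) (hub : u ≠ b) :
    ((insert (a, v) (E.erase (b, v))).filter (fun p => p.1 = u)).card =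
      (E.filter (fun p => p.1 = u)).card := by
  rw [Finset.filter_insert, if_neg hua.symm, Finset.filter_erase,
    Finset.erase_eq_of_notMem (by simp [hub.symm])]

theorem card_filter_fst_insert_erase_left (hab : a ≠ b) (hav : (a, v) ∉ E) :
    ((insert (a, v) (E.erase (b, v))).filter (fun p => p.1 = a)).card =
      (E.filter (fun p => p.1 = a)).card + 1 := by
  rw [Finset.filter_insert, if_pos rfl, Finset.filter_erase,
    Finset.erase_eq_of_notMem (by simp [hab.symm]), Finset.card_insert_of_notMem (by simp [hav])]

theorem card_filter_fst_insert_erase_right (hab : a ≠ b) (hbv : (b, v) ∈ E) :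
    ((insert (a, v) (E.erase (b, v))).filter (fun p => p.1 = b)).card =
      (E.filter (fun p => p.1 = b)).card - 1 := by
  rw [Finset.filter_insert, if_neg hab, Finset.filter_erase,
    Finset.card_erase_of_mem (by simp [hbv])]

theorem card_filter_snd_insert_erase (hbv : (b, v) ∈ E) (hav : (a, v) ∉ E) (w : β) :
    ((insert (a, v) (E.erase (b, v))).filter (fun p => p.2 = w)).card =
      (E.filter (fun p => p.2 = w)).card := by
  rw [Finset.filter_insert, Finset.filter_erase]
  by_cases hvw : v = w
  · subst hvw
    have hbv' : (b, v) ∈ E.filter (fun p => p.2 = v) := by simp [hbv]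
    rw [if_pos rfl, Finset.card_insert_of_notMem (by simp [hav]),
      Finset.card_erase_add_one hbv']
  · rw [if_neg hvw, Finset.erase_eq_of_notMem (by simp [hvw])]

end EdgeMove

theorem bigraphicM_iff_exists_finset {D1 D2 : Multiset ℕ} :
    BigraphicM D1 D2 ↔ ∃ (n m : ℕ) (E : Finset (Fin n × Fin m)),
      D1 = Finset.univ.val.map (fun u => (E.filter (fun p => p.1 = u)).card) ∧
      D2 = Finset.univ.val.map (fun v => (E.filter (fun p => p.2 = v)).card) := by
  refine ⟨fun ⟨E, h1, h2⟩ => ⟨_, _, E, h1, h2⟩, fun ⟨n, m, E, h1, h2⟩ => ?_⟩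
  obtain rfl : Multiset.card D1 = n := by simp [h1]
  obtain rfl : Multiset.card D2 = m := by simp [h2]
  exact ⟨E, h1, h2⟩

/-- If `(D1, D2)` is bigraphic, where `D1` contains entries `di < dj`, then the pair
obtained by increasing `di` by one and decreasing `dj` by one is also bigraphic. -/
theorem stmt8 (M D2 : Multiset ℕ) (di dj : ℕ) (h : di < dj)
    (hb : BigraphicM (di ::ₘ dj ::ₘ M) D2) :
    BigraphicM ((di + 1) ::ₘ (dj - 1) ::ₘ M) D2 := by
  obtain ⟨n, m, E, hD1, hD2⟩ := bigraphicM_iff_exists_finset.mp hb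
  obtain ⟨a, ha, b, hba, rfl, rfl, rfl⟩ := Finset.exists_mem_of_val_map_eq_cons_cons hD1.symm
  have hab : a ≠ b := (Finset.ne_of_mem_erase hba).symm
  obtain ⟨v, hbv, hav⟩ := exists_mem_notMem_of_card_filter_fst_lt h
  refine bigraphicM_iff_exists_finset.mpr
    ⟨n, m, insert (a, v) (E.erase (b, v)), ?_, hD2.trans ?_⟩
  · rw [Finset.val_map_eq_cons_cons ha hba, card_filter_fst_insert_erase_left hab hav,
      card_filter_fst_insert_erase_right hab hbv]
    refine congrArg _ (congrArg _ (Multiset.map_congr rfl fun u hu => ?_))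
    rw [Finset.mem_val, Finset.mem_erase, Finset.mem_erase] at hu
    exact (card_filter_fst_insert_erase_of_ne hu.2.1 hu.1).symm
  · exact Multiset.map_congr rfl fun w _ => (card_filter_snd_insert_erase hbv hav w).symm
end

section
/- Let n1, n2 be positive integers, Σ a nonnegative integer, and d1 < Δ1, d2 < Δ2 nonnegative integers with n1·d1 ≤ Σ ≤ n1·Δ1 and n2·d2 ≤ Σ ≤ n2·Δ2. Let D1 be any sequence of length n1 with entry sum Σ, minimum entry at least d1 and maximum entry at most Δ1, and let D2 be any sequence of length n2 with entry sum Σ, minimum entry at least d2 and maximum entry at most Δ2. If the pair (LBDS(n1, Σ, Δ1, d1), LBDS(n2, Σ, Δ2, d2)) is bigraphic, then (D1, D2) is bigraphic. -/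
/-- The least balanced degree sequence `LBDS(n, s, Δ, d)`: `k` copies of `Δ`, one
intermediate entry, and `n - k - 1` copies of `d`, where `k = ⌊(s - n·d)/(Δ - d)⌋`. -/
def LBDS (n s Δ d : ℕ) : Multiset ℕ :=
  Multiset.replicate ((s - n * d) / (Δ - d)) Δ +
    (s - ((s - n * d) / (Δ - d)) * Δ - (n - (s - n * d) / (Δ - d) - 1) * d) ::ₘ
      Multiset.replicate (n - (s - n * d) / (Δ - d) - 1) d


def BG (n m : ℕ) (D1 D2 : Multiset ℕ) : Prop :=
  ∃ E : Finset (Fin n × Fin m),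
    D1 = Finset.univ.val.map (fun u => (E.filter (fun p => p.1 = u)).card) ∧
    D2 = Finset.univ.val.map (fun v => (E.filter (fun p => p.2 = v)).card)

lemma BG.card1 {n m D1 D2} (h : BG n m D1 D2) : Multiset.card D1 = n := by
  obtain ⟨E, h1, h2⟩ := h; rw [h1]; simp

lemma BG.card2 {n m D1 D2} (h : BG n m D1 D2) : Multiset.card D2 = m := by
  obtain ⟨E, h1, h2⟩ := h; rw [h2]; simp

lemma BG.swap {n m D1 D2} (h : BG n m D1 D2) : BG m n D2 D1 := by
  obtain ⟨E, h1, h2⟩ := h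
  refine ⟨E.image Prod.swap, ?_, ?_⟩
  · rw [h2]
    congr 1; funext v
    rw [show (E.image Prod.swap).filter (fun p => p.1 = v) = (E.filter (fun p => p.2 = v)).image Prod.swap by
      ext p; simp [Finset.mem_filter, Prod.ext_iff]; aesop]
    rw [Finset.card_image_of_injective _ Prod.swap_injective]
  · rw [h1]
    congr 1; funext u
    rw [show (E.image Prod.swap).filter (fun p => p.2 = u) = (E.filter (fun p => p.1 = u)).image Prod.swap by
      ext p; simp [Finset.mem_filter, Prod.ext_iff]]
    rw [Finset.card_image_of_injective _ Prod.swap_injective]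

lemma BG.switch {n m : ℕ} {a b : ℕ} {D D2 : Multiset ℕ} (hba : b < a)
    (h : BG n m (a ::ₘ b ::ₘ D) D2) : BG n m ((a - 1) ::ₘ (b + 1) ::ₘ D) D2 := by
  obtain ⟨E, h1, h2⟩ := h
  set deg : Fin n → ℕ := fun u => (E.filter (fun p => p.1 = u)).card with hdeg
  have hamem : a ∈ Multiset.map deg Finset.univ.val := by
    rw [← h1]; exact Multiset.mem_cons_self _ _
  obtain ⟨u, hu, hua⟩ := Multiset.mem_map.mp hamem
  have hrest1 : Finset.univ.val = u ::ₘ Finset.univ.val.erase u := (Multiset.cons_erase hu).symm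
  have h1' : b ::ₘ D = Multiset.map deg (Finset.univ.val.erase u) := by
    have := h1
    rw [hrest1, Multiset.map_cons, hua] at this
    exact (Multiset.cons_inj_right _).mp this
  have hbmem : b ∈ Multiset.map deg (Finset.univ.val.erase u) := by
    rw [← h1']; exact Multiset.mem_cons_self _ _
  obtain ⟨w, hw, hwb⟩ := Multiset.mem_map.mp hbmem
  have hwu : w ≠ u := ((Multiset.Nodup.mem_erase_iff Finset.univ.nodup).mp hw).1
  have hrest2 : Finset.univ.val.erase u = w ::ₘ (Finset.univ.val.erase u).erase w :=
    (Multiset.cons_erase hw).symm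
  have hD : D = Multiset.map deg ((Finset.univ.val.erase u).erase w) := by
    have := h1'
    rw [hrest2, Multiset.map_cons, hwb] at this
    exact (Multiset.cons_inj_right _).mp this
  -- find v with (u,v) ∈ E, (w,v) ∉ E
  have hNu : ((E.filter (fun p => p.1 = u)).image Prod.snd).card = deg u := by
    apply Finset.card_image_of_injOn
    intro p hp q hq hpq
    simp only [Finset.coe_filter, Set.mem_setOf_eq] at hp hq
    exact Prod.ext (hp.2.trans hq.2.symm) hpq
  have hNw : ((E.filter (fun p => p.1 = w)).image Prod.snd).card ≤ deg w :=
    Finset.card_image_le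
  have hnotsub : ¬ (E.filter (fun p => p.1 = u)).image Prod.snd ⊆
      (E.filter (fun p => p.1 = w)).image Prod.snd := by
    intro hsub
    have h3 := Finset.card_le_card hsub
    rw [hNu] at h3
    have : a ≤ b := by rw [← hua, ← hwb]; omega
    omega
  obtain ⟨v, hvu, hvw⟩ := Finset.not_subset.mp hnotsub
  obtain ⟨p, hp, hpv⟩ := Finset.mem_image.mp hvu
  simp only [Finset.mem_filter] at hp
  have huvE : (u, v) ∈ E := (Prod.ext hp.2 hpv : p = (u, v)) ▸ hp.1
  have hwvE : (w, v) ∉ E := fun hmem =>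
    hvw (Finset.mem_image.mpr ⟨(w, v), Finset.mem_filter.mpr ⟨hmem, rfl⟩, rfl⟩)
  set E' : Finset (Fin n × Fin m) := insert (w, v) (E.erase (u, v)) with hE'
  have memE' : ∀ q : Fin n × Fin m, q ∈ E' ↔ (q = (w, v) ∨ (q ∈ E ∧ q ≠ (u, v))) := by
    intro q; rw [hE']; simp [Finset.mem_insert, Finset.mem_erase]; tauto
  have keyw : E'.filter (fun p => p.1 = w) = insert (w, v) (E.filter (fun p => p.1 = w)) := by
    ext q
    simp only [Finset.mem_filter, Finset.mem_insert, memE' q]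
    constructor
    · rintro ⟨hq1 | ⟨hqE, _⟩, hq2⟩
      · exact Or.inl hq1
      · exact Or.inr ⟨hqE, hq2⟩
    · rintro (hq1 | ⟨hqE, hq2⟩)
      · exact ⟨Or.inl hq1, by rw [hq1]⟩
      · refine ⟨Or.inr ⟨hqE, fun hc => ?_⟩, hq2⟩
        rw [hc] at hq2; exact hwu hq2.symm
  have keyu : E'.filter (fun p => p.1 = u) = (E.filter (fun p => p.1 = u)).erase (u, v) := by
    ext q
    simp only [Finset.mem_filter, Finset.mem_erase, memE' q]
    constructor
    · rintro ⟨hq1 | ⟨hqE, hq2⟩, hq3⟩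
      · exfalso; rw [hq1] at hq3; exact hwu hq3
      · exact ⟨hq2, hqE, hq3⟩
    · rintro ⟨hq2, hqE, hq3⟩
      exact ⟨Or.inr ⟨hqE, hq2⟩, hq3⟩
  have keyo : ∀ x : Fin n, x ≠ u → x ≠ w → E'.filter (fun p => p.1 = x) = E.filter (fun p => p.1 = x) := by
    intro x hxu hxw
    ext q
    simp only [Finset.mem_filter, memE' q]
    constructor
    · rintro ⟨hq1 | ⟨hqE, _⟩, hq3⟩
      · exfalso; rw [hq1] at hq3; exact hxw hq3.symm
      · exact ⟨hqE, hq3⟩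
    · rintro ⟨hqE, hq3⟩
      refine ⟨Or.inr ⟨hqE, fun hc => ?_⟩, hq3⟩
      rw [hc] at hq3; exact hxu hq3.symm
  have hnmw : (w, v) ∉ E.filter (fun p : Fin n × Fin m => p.1 = w) :=
    fun hc => hwvE (Finset.mem_filter.mp hc).1
  have hmemu : (u, v) ∈ E.filter (fun p : Fin n × Fin m => p.1 = u) :=
    Finset.mem_filter.mpr ⟨huvE, rfl⟩
  have hdw : (E'.filter (fun p => p.1 = w)).card = b + 1 := by
    rw [keyw, Finset.card_insert_of_notMem hnmw]
    exact congrArg (· + 1) hwb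
  have hdu : (E'.filter (fun p => p.1 = u)).card = a - 1 := by
    rw [keyu, Finset.card_erase_of_mem hmemu]
    exact congrArg (· - 1) hua
  have hdo : ∀ x : Fin n, x ≠ u → x ≠ w →
      (E'.filter (fun p => p.1 = x)).card = deg x := by
    intro x hxu hxw
    rw [keyo x hxu hxw]
  refine ⟨E', ?_, ?_⟩
  · rw [hrest1, hrest2]
    simp only [Multiset.map_cons]
    rw [hdu, hdw, Multiset.cons_inj_right, Multiset.cons_inj_right, hD]
    apply Multiset.map_congr rfl
    intro x hx
    have hnd : (Finset.univ.val.erase u).Nodup := Finset.univ.nodup.erase u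
    have hxw : x ≠ w := ((Multiset.Nodup.mem_erase_iff hnd).mp hx).1
    have hxu : x ≠ u :=
      ((Multiset.Nodup.mem_erase_iff Finset.univ.nodup).mp (Multiset.mem_of_mem_erase hx)).1
    exact (hdo x hxu hxw).symm
  · rw [h2]
    apply Multiset.map_congr rfl
    intro v' _
    by_cases hv : v' = v
    · subst hv
      have keyv : E'.filter (fun p => p.2 = v') = insert (w, v') ((E.filter (fun p => p.2 = v')).erase (u, v')) := by
        ext q
        simp only [Finset.mem_filter, Finset.mem_insert, Finset.mem_erase, memE' q]
        constructor
        · rintro ⟨hq1 | ⟨hqE, hq2⟩, hq3⟩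
          · exact Or.inl hq1
          · exact Or.inr ⟨hq2, hqE, hq3⟩
        · rintro (hq1 | ⟨hq2, hqE, hq3⟩)
          · exact ⟨Or.inl hq1, by rw [hq1]⟩
          · exact ⟨Or.inr ⟨hqE, hq2⟩, hq3⟩
      have h5 : (w, v') ∉ (E.filter (fun p : Fin n × Fin m => p.2 = v')).erase (u, v') :=
        fun hc => hwvE (Finset.mem_filter.mp (Finset.mem_of_mem_erase hc)).1
      have h6 : (u, v') ∈ E.filter (fun p : Fin n × Fin m => p.2 = v') :=
        Finset.mem_filter.mpr ⟨huvE, rfl⟩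
      have hpos : 0 < (E.filter (fun p : Fin n × Fin m => p.2 = v')).card :=
        Finset.card_pos.mpr ⟨(u, v'), h6⟩
      rw [keyv, Finset.card_insert_of_notMem h5, Finset.card_erase_of_mem h6]
      omega
    · have keyv : E'.filter (fun p => p.2 = v') = E.filter (fun p => p.2 = v') := by
        ext q
        simp only [Finset.mem_filter, memE' q]
        constructor
        · rintro ⟨hq1 | ⟨hqE, _⟩, hq3⟩
          · exfalso; rw [hq1] at hq3; exact hv hq3.symm
          · exact ⟨hqE, hq3⟩
        · rintro ⟨hqE, hq3⟩
          refine ⟨Or.inr ⟨hqE, fun hc => ?_⟩, hq3⟩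
          rw [hc] at hq3; exact hv hq3.symm
      rw [keyv]

lemma BG.strip_zero {n m : ℕ} {D1 D2 : Multiset ℕ}
    (h : BG (n + 1) m (0 ::ₘ D1) D2) : BG n m D1 D2 := by
  obtain ⟨E, h1, h2⟩ := h
  set deg : Fin (n + 1) → ℕ := fun u => (E.filter (fun p => p.1 = u)).card with hdeg
  have h0mem : (0 : ℕ) ∈ Multiset.map deg Finset.univ.val := by
    rw [← h1]; exact Multiset.mem_cons_self _ _
  obtain ⟨u, hu, hu0⟩ := Multiset.mem_map.mp h0mem
  have hrest1 : Finset.univ.val = u ::ₘ Finset.univ.val.erase u := (Multiset.cons_erase hu).symm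
  have h1' : D1 = Multiset.map deg (Finset.univ.val.erase u) := by
    have := h1
    rw [hrest1, Multiset.map_cons, hu0] at this
    exact (Multiset.cons_inj_right _).mp this
  have hnotE : ∀ v : Fin m, (u, v) ∉ E := by
    intro v hv
    have : (u, v) ∈ E.filter (fun p => p.1 = u) := Finset.mem_filter.mpr ⟨hv, rfl⟩
    have hc : (E.filter (fun p => p.1 = u)).card ≠ 0 :=
      Finset.card_ne_zero_of_mem this
    exact hc hu0
  classical
  set E' : Finset (Fin n × Fin m) :=
    Finset.univ.filter (fun q : Fin n × Fin m => (u.succAbove q.1, q.2) ∈ E) with hE'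
  have memE' : ∀ q : Fin n × Fin m, q ∈ E' ↔ (u.succAbove q.1, q.2) ∈ E := by
    intro q; rw [hE']; simp
  -- row degrees
  have hrow : ∀ i : Fin n,
      (E'.filter (fun p => p.1 = i)).card = deg (u.succAbove i) := by
    intro i
    rw [hdeg]
    apply Finset.card_bij (fun q _ => (u.succAbove q.1, q.2))
    · intro q hq
      simp only [Finset.mem_filter] at hq ⊢
      refine ⟨(memE' q).mp hq.1, ?_⟩
      rw [hq.2]
    · intro q1 hq1 q2 hq2 heq
      simp only [Prod.mk.injEq] at heq
      exact Prod.ext (Fin.succAbove_right_injective heq.1) heq.2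
    · intro p hp
      simp only [Finset.mem_filter] at hp
      refine ⟨(i, p.2), ?_, ?_⟩
      · simp only [Finset.mem_filter, memE']
        refine ⟨?_, by trivial⟩
        rw [← hp.2]
        simpa using hp.1
      · rw [← hp.2]
    -- column degrees
  have hcol : ∀ v : Fin m,
      (E'.filter (fun p => p.2 = v)).card = (E.filter (fun p => p.2 = v)).card := by
    intro v
    apply Finset.card_bij (fun q _ => (u.succAbove q.1, q.2))
    · intro q hq
      simp only [Finset.mem_filter] at hq ⊢
      exact ⟨(memE' q).mp hq.1, hq.2⟩
    · intro q1 hq1 q2 hq2 heq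
      simp only [Prod.mk.injEq] at heq
      exact Prod.ext (Fin.succAbove_right_injective heq.1) heq.2
    · intro p hp
      simp only [Finset.mem_filter] at hp
      have hp1 : p.1 ≠ u := by
        intro hc
        exact hnotE p.2 (by rw [← hc]; exact hp.1)
      obtain ⟨i, hi⟩ := Fin.exists_succAbove_eq hp1
      refine ⟨(i, p.2), ?_, ?_⟩
      · simp only [Finset.mem_filter, memE']
        refine ⟨?_, hp.2⟩
        rw [hi]
        exact hp.1
      · rw [hi]
  -- univ map relation
  have huniv : (Finset.univ.val : Multiset (Fin n)).map u.succAbove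
      = (Finset.univ.val : Multiset (Fin (n + 1))).erase u := by
    have hfs : (Finset.univ.map ⟨u.succAbove, Fin.succAbove_right_injective⟩ : Finset (Fin (n+1)))
        = Finset.univ.erase u := by
      ext x
      simp only [Finset.mem_map, Finset.mem_erase, Finset.mem_univ, and_true,
        Function.Embedding.coeFn_mk]
      constructor
      · rintro ⟨i, _, rfl⟩
        exact Fin.succAbove_ne u i
      · intro hx
        obtain ⟨i, hi⟩ := Fin.exists_succAbove_eq hx
        exact ⟨i, trivial, hi⟩
    have := congrArg Finset.val hfs
    rwa [Finset.map_val, Finset.erase_val] at this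
  refine ⟨E', ?_, ?_⟩
  · rw [h1', ← huniv, Multiset.map_map]
    apply Multiset.map_congr rfl
    intro i _
    exact (hrow i).symm
  · rw [h2]
    apply Multiset.map_congr rfl
    intro v _
    exact (hcol v).symm

def extk (n s Δ d : ℕ) : ℕ := min ((s - n * d) / (Δ - d)) (n - 1)

def ext (n s Δ d : ℕ) : Multiset ℕ :=
  Multiset.replicate (extk n s Δ d) Δ +
    (s - extk n s Δ d * Δ - (n - 1 - extk n s Δ d) * d) ::ₘ
      Multiset.replicate (n - 1 - extk n s Δ d) d

lemma ext_card {n s Δ d : ℕ} (hn : 0 < n) : Multiset.card (ext n s Δ d) = n := by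
  have h := min_le_right ((s - n * d) / (Δ - d)) (n - 1)
  rw [ext]
  simp only [Multiset.card_add, Multiset.card_replicate, Multiset.card_cons]
  rw [extk] at *
  omega

lemma ext_form {n s d Δ c q m : ℕ} (hdΔ : d < Δ) (hm1 : d ≤ m) (hm2 : m < Δ)
    (hn : n = c + 1 + q) (hs : c * Δ + (m + q * d) = s) :
    Multiset.replicate c Δ + (m ::ₘ Multiset.replicate q d) = ext n s Δ d := by
  set e := Δ - d with he
  have hepos : 0 < e := by omega
  have hΔ : Δ = d + e := by omega
  set r := m - d with hr
  have hm : m = d + r := by omega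
  have hre : r < e := by omega
  have hkey : s = n * d + (e * c + r) := by rw [← hs, hΔ, hn, hm]; ring
  have ht : s - n * d = e * c + r := by rw [hkey, Nat.add_sub_cancel_left]
  have hdiv : (s - n * d) / e = c := by
    rw [ht, Nat.mul_add_div hepos, Nat.div_eq_of_lt hre, Nat.add_zero]
  have hk : extk n s Δ d = c := by
    rw [extk, ← he, hdiv]; omega
  rw [ext, hk, show n - 1 - c = q by omega]
  have hmm : s - c * Δ - q * d = m := by
    have h2 : s = c * Δ + (q * d + m) := by rw [← hs]; ring
    rw [h2, Nat.add_sub_cancel_left, Nat.add_sub_cancel_left]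
  rw [hmm]

lemma ext_top {n Δ d : ℕ} (hdΔ : d < Δ) (hn : 0 < n) :
    ext n (n * Δ) Δ d = Multiset.replicate n Δ := by
  set e := Δ - d with he
  have hepos : 0 < e := by omega
  have hms : n * Δ - n * d = n * e := by rw [he, Nat.mul_sub]
  have hdiv : (n * Δ - n * d) / e = n := by
    rw [hms, mul_comm, Nat.mul_div_cancel_left _ hepos]
  have hk : extk n (n * Δ) Δ d = n - 1 := by
    rw [extk, ← he, hdiv]; omega
  have hΔle : Δ ≤ n * Δ := Nat.le_mul_of_pos_left Δ hn
  have hsub : (n - 1) * Δ = n * Δ - Δ := by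
    rw [tsub_mul, one_mul]
  rw [ext, hk, Nat.sub_self]
  rw [show n * Δ - (n - 1) * Δ - 0 * d = Δ by
    rw [hsub, Nat.sub_sub_self hΔle, Nat.zero_mul, Nat.sub_zero]]
  rw [Multiset.replicate_zero]
  rw [show (Δ ::ₘ (0 : Multiset ℕ)) = {Δ} from rfl]
  rw [add_comm, Multiset.singleton_add]
  rw [show n = (n - 1) + 1 by omega, Multiset.replicate_succ, Nat.add_sub_cancel]

lemma LBDS_eq_ext {n s d Δ : ℕ} (hdΔ : d < Δ) (hn : 0 < n) (hsl : n * d ≤ s)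
    (hsu : s < n * Δ) : LBDS n s Δ d = ext n s Δ d := by
  have hepos : 0 < Δ - d := by omega
  have hms : n * Δ - n * d = n * (Δ - d) := by rw [Nat.mul_sub]
  have hAB : n * d ≤ n * Δ := Nat.mul_le_mul_left n (le_of_lt hdΔ)
  have htlt : s - n * d < n * (Δ - d) := by omega
  have hkn : (s - n * d) / (Δ - d) < n := (Nat.div_lt_iff_lt_mul hepos).mpr htlt
  rw [LBDS, ext, extk]
  rw [show min ((s - n * d) / (Δ - d)) (n - 1) = (s - n * d) / (Δ - d) by omega,
    show n - 1 - (s - n * d) / (Δ - d) = n - (s - n * d) / (Δ - d) - 1 by omega]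

lemma LBDS_top {n Δ d : ℕ} (hdΔ : d < Δ) (hn : 0 < n) :
    LBDS n (n * Δ) Δ d = 0 ::ₘ ext n (n * Δ) Δ d := by
  have hepos : 0 < Δ - d := by omega
  have hms : n * Δ - n * d = n * (Δ - d) := by rw [Nat.mul_sub]
  have hdiv : (n * Δ - n * d) / (Δ - d) = n := by
    rw [hms, mul_comm, Nat.mul_div_cancel_left _ hepos]
  rw [LBDS, hdiv, ext_top hdΔ hn]
  rw [show n - n - 1 = 0 by omega]
  rw [Nat.sub_self, Nat.zero_mul, Nat.sub_self, Multiset.replicate_zero]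
  rw [show ((0:ℕ) ::ₘ (0 : Multiset ℕ)) = {0} from rfl, add_comm, Multiset.singleton_add]

lemma extreme_eq_ext {n s d Δ : ℕ} (hdΔ : d < Δ) (hn : 0 < n) {D : Multiset ℕ}
    (hc : Multiset.card D = n) (hs : D.sum = s)
    (hlo : ∀ x ∈ D, d ≤ x) (hhi : ∀ x ∈ D, x ≤ Δ)
    (hext : ¬ ∃ a b D₀, D = a ::ₘ b ::ₘ D₀ ∧ a ≤ b ∧ d < a ∧ b < Δ) :
    D = ext n s Δ d := by
  classical
  set C := D.filter (fun x => ¬ x < Δ) with hCdef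
  set R := D.filter (fun x => x < Δ) with hRdef
  have hsplit : R + C = D := Multiset.filter_add_not _ D
  have hC : C = Multiset.replicate (Multiset.card C) Δ := by
    rw [Multiset.eq_replicate_card]
    intro x hx
    have hx' := Multiset.mem_filter.mp hx
    have := hhi x hx'.1
    omega
  set M := R.filter (fun x => d < x) with hMdef
  set Q := R.filter (fun x => ¬ d < x) with hQdef
  have hsplit2 : M + Q = R := Multiset.filter_add_not _ R
  have hQ : Q = Multiset.replicate (Multiset.card Q) d := by
    rw [Multiset.eq_replicate_card]
    intro x hx
    have hx' := Multiset.mem_filter.mp hx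
    have := hlo x (Multiset.mem_filter.mp hx'.1).1
    omega
  -- elements of M are strictly between d and Δ
  have hMel : ∀ x ∈ M, d < x ∧ x < Δ := by
    intro x hx
    have hx' := Multiset.mem_filter.mp hx
    exact ⟨hx'.2, (Multiset.mem_filter.mp hx'.1).2⟩
  have hMD : M ≤ D := le_trans (Multiset.filter_le _ R) (Multiset.filter_le _ D)
  have hM1 : Multiset.card M ≤ 1 := by
    by_contra h2
    push_neg at h2
    obtain ⟨a, ha⟩ := (Multiset.card_pos_iff_exists_mem (s := M)).mp (by omega)
    obtain ⟨M', hM'⟩ := Multiset.exists_cons_of_mem ha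
    have hbM' : ∃ b, b ∈ M' := (Multiset.card_pos_iff_exists_mem (s := M')).mp (by
      have hcM := congrArg Multiset.card hM'
      simp at hcM
      omega)
    obtain ⟨b, hbm⟩ := hbM'
    have hb : b ∈ M.erase a := by
      rw [hM', Multiset.erase_cons_head]
      exact hbm
    have haD : a ∈ D := Multiset.subset_of_le hMD ha
    have hbD : b ∈ D.erase a := Multiset.subset_of_le (Multiset.erase_le_erase a hMD) hb
    have hDa : D = a ::ₘ D.erase a := (Multiset.cons_erase haD).symm
    have hDab : D = a ::ₘ b ::ₘ (D.erase a).erase b :=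
      hDa.trans (congrArg (Multiset.cons a) (Multiset.cons_erase hbD).symm)
    obtain ⟨hda, haΔ⟩ := hMel a ha
    obtain ⟨hdb, hbΔ⟩ := hMel b (Multiset.mem_of_mem_erase hb)
    rcases le_total a b with hab | hba
    · exact hext ⟨a, b, (D.erase a).erase b, hDab, hab, hda, hbΔ⟩
    · refine hext ⟨b, a, (D.erase a).erase b, ?_, hba, hdb, haΔ⟩
      exact hDab.trans (Multiset.cons_swap a b _)
  -- decomposition: D = replicate c Δ + (M + replicate q d)
  set c := Multiset.card C with hcc
  set q := Multiset.card Q with hqq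
  have hD : D = Multiset.replicate c Δ + (M + Multiset.replicate q d) := by
    rw [← hQ, ← hC, hsplit2, add_comm, hsplit]
  interval_cases hMc : Multiset.card M
  case _ =>
    -- M = 0
    have hM0 : M = 0 := Multiset.card_eq_zero.mp hMc
    rw [hM0, zero_add] at hD
    rcases Nat.eq_zero_or_pos q with hq0 | hqpos
    · -- D = replicate c Δ, s = n * Δ
      rw [hq0, Multiset.replicate_zero, add_zero] at hD
      have hcn : c = n := by
        rw [hD] at hc
        simpa using hc
      have hsn : s = n * Δ := by
        rw [hD, hcn] at hs
        rw [← hs, Multiset.sum_replicate, smul_eq_mul]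
      rw [hsn, ext_top hdΔ hn, hD, hcn]
    · -- D = replicate c Δ + (d ::ₘ replicate (q-1) d)
      have hq' : q = (q - 1) + 1 := by omega
      rw [hq', Multiset.replicate_succ] at hD
      have hcn : n = c + 1 + (q - 1) := by
        rw [hD] at hc
        simp at hc
        omega
      have hsum : c * Δ + (d + (q - 1) * d) = s := by
        rw [hD] at hs
        rw [← hs]
        simp [Multiset.sum_replicate, smul_eq_mul]
        ring
      rw [hD]
      exact ext_form hdΔ le_rfl hdΔ hcn hsum
  case _ =>
    -- M = {m0}
    obtain ⟨m0, hm0⟩ := Multiset.card_eq_one.mp hMc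
    obtain ⟨hdm, hmΔ⟩ := hMel m0 (by rw [hm0]; exact Multiset.mem_singleton_self m0)
    rw [hm0, Multiset.singleton_add] at hD
    have hcn : n = c + 1 + q := by
      rw [hD] at hc
      simp at hc
      omega
    have hsum : c * Δ + (m0 + q * d) = s := by
      rw [hD] at hs
      rw [← hs]
      simp [Multiset.sum_replicate, smul_eq_mul]
      ring
    rw [hD]
    exact ext_form hdΔ (le_of_lt hdm) hmΔ hcn hsum


lemma sumsq_le {D : Multiset ℕ} {n Δ : ℕ} (hc : Multiset.card D = n)
    (hhi : ∀ x ∈ D, x ≤ Δ) :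
    (Multiset.map (fun x => x * x) D).sum ≤ n * (Δ * Δ) := by
  have h := Multiset.sum_le_card_nsmul (D.map (fun x => x * x)) (Δ * Δ) ?_
  · rwa [Multiset.card_map, hc, smul_eq_mul] at h
  · intro x hx
    obtain ⟨y, hy, rfl⟩ := Multiset.mem_map.mp hx
    exact Nat.mul_le_mul (hhi y hy) (hhi y hy)

lemma main_ind {n m s d Δ : ℕ} (hdΔ : d < Δ) (hn : 0 < n) (D2 : Multiset ℕ)
    (hbase : BG n m (ext n s Δ d) D2) :
    ∀ N D, n * (Δ * Δ) - (Multiset.map (fun x => x * x) D).sum < N →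
      Multiset.card D = n → D.sum = s →
      (∀ x ∈ D, d ≤ x) → (∀ x ∈ D, x ≤ Δ) → BG n m D D2 := by
  intro N
  induction N with
  | zero => intro D h _ _ _ _; exact absurd h (Nat.not_lt_zero _)
  | succ N ih =>
    intro D hN hc hs hlo hhi
    by_cases hextp : ∃ a b D₀, D = a ::ₘ b ::ₘ D₀ ∧ a ≤ b ∧ d < a ∧ b < Δ
    · obtain ⟨a, b, D₀, hD, hab, hda, hbΔ⟩ := hextp
      have ha1 : 1 ≤ a := by omega
      have hdb : d < b := lt_of_lt_of_le hda hab
      -- the more balanced sequence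
      have hcard' : Multiset.card ((b + 1) ::ₘ (a - 1) ::ₘ D₀) = n := by
        rw [hD] at hc
        simpa using hc
      have hsum0 : a + (b + D₀.sum) = s := by
        rw [hD] at hs
        simpa [Multiset.sum_cons] using hs
      have hsum' : ((b + 1) ::ₘ (a - 1) ::ₘ D₀).sum = s := by
        simp only [Multiset.sum_cons]
        omega
      have hmemD : ∀ x ∈ D₀, x ∈ D := by
        intro x hx
        rw [hD]
        exact Multiset.mem_cons_of_mem (Multiset.mem_cons_of_mem hx)
      have hlo' : ∀ x ∈ (b + 1) ::ₘ (a - 1) ::ₘ D₀, d ≤ x := by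
        intro x hx
        rcases Multiset.mem_cons.mp hx with rfl | hx
        · omega
        · rcases Multiset.mem_cons.mp hx with rfl | hx
          · omega
          · exact hlo x (hmemD x hx)
      have hhi' : ∀ x ∈ (b + 1) ::ₘ (a - 1) ::ₘ D₀, x ≤ Δ := by
        intro x hx
        rcases Multiset.mem_cons.mp hx with rfl | hx
        · omega
        · rcases Multiset.mem_cons.mp hx with rfl | hx
          · have := hhi a (by rw [hD]; exact Multiset.mem_cons_self _ _)
            omega
          · exact hhi x (hmemD x hx)
      -- measure decreases
      have hkey : (b + 1) * (b + 1) + (a - 1) * (a - 1) = (a * a + b * b) + 2 * (b - a + 1) := by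
        obtain ⟨a', rfl⟩ : ∃ a', a = a' + 1 := ⟨a - 1, by omega⟩
        obtain ⟨t, rfl⟩ : ∃ t, b = (a' + 1) + t := ⟨b - (a' + 1), by omega⟩
        rw [show a' + 1 - 1 = a' by omega, show a' + 1 + t - (a' + 1) + 1 = t + 1 by omega]
        ring
      have hSD : (Multiset.map (fun x => x * x) D).sum
          = a * a + (b * b + (Multiset.map (fun x => x * x) D₀).sum) := by
        rw [hD]
        simp [Multiset.map_cons, Multiset.sum_cons]
      have hSD' : (Multiset.map (fun x => x * x) ((b + 1) ::ₘ (a - 1) ::ₘ D₀)).sum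
          = (b + 1) * (b + 1) + ((a - 1) * (a - 1) + (Multiset.map (fun x => x * x) D₀).sum) := by
        simp [Multiset.map_cons, Multiset.sum_cons]
      have hup : (Multiset.map (fun x => x * x) D).sum + 2
          ≤ (Multiset.map (fun x => x * x) ((b + 1) ::ₘ (a - 1) ::ₘ D₀)).sum := by
        rw [hSD, hSD']
        linarith [hkey]
      have hle : (Multiset.map (fun x => x * x) ((b + 1) ::ₘ (a - 1) ::ₘ D₀)).sum ≤ n * (Δ * Δ) :=
        sumsq_le hcard' hhi'
      have hmeas : n * (Δ * Δ) - (Multiset.map (fun x => x * x) ((b + 1) ::ₘ (a - 1) ::ₘ D₀)).sum < N := by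
        omega
      have hrec : BG n m ((b + 1) ::ₘ (a - 1) ::ₘ D₀) D2 :=
        ih _ hmeas hcard' hsum' hlo' hhi'
      have hsw := BG.switch (show a - 1 < b + 1 by omega) hrec
      rw [show b + 1 - 1 = b by omega, show a - 1 + 1 = a by omega] at hsw
      rw [hD, Multiset.cons_swap]
      exact hsw
    · have hDext : D = ext n s Δ d := extreme_eq_ext hdΔ hn hc hs hlo hhi hextp
      rw [hDext]
      exact hbase

lemma LBDS_strip {n m s d Δ c : ℕ} {D2 : Multiset ℕ} (hdΔ : d < Δ) (hn : 0 < n)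
    (hsl : n * d ≤ s) (hsu : s ≤ n * Δ)
    (h : BG c m (LBDS n s Δ d) D2) : BG n m (ext n s Δ d) D2 := by
  rcases lt_or_eq_of_le hsu with hlt | heq
  · rw [LBDS_eq_ext hdΔ hn hsl hlt] at h
    have hcn : c = n := by rw [← h.card1, ext_card hn]
    subst hcn
    exact h
  · subst heq
    rw [LBDS_top hdΔ hn] at h
    have hcn : c = n + 1 := by
      have h2 := h.card1
      simp only [Multiset.card_cons, ext_card hn] at h2
      omega
    subst hcn
    exact BG.strip_zero h


/-- If the pair of least balanced degree sequences is bigraphic, then every pair of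
degree sequences with the same length, sum and degree bounds is bigraphic. -/
theorem stmt9 (n1 n2 s d1 Δ1 d2 Δ2 : ℕ) (hn1 : 0 < n1) (hn2 : 0 < n2)
    (hd1 : d1 < Δ1) (hd2 : d2 < Δ2)
    (hs1 : n1 * d1 ≤ s) (hs1' : s ≤ n1 * Δ1)
    (hs2 : n2 * d2 ≤ s) (hs2' : s ≤ n2 * Δ2)
    (D1 D2 : Multiset ℕ)
    (hc1 : Multiset.card D1 = n1) (hsum1 : D1.sum = s)
    (hlo1 : ∀ x ∈ D1, d1 ≤ x) (hhi1 : ∀ x ∈ D1, x ≤ Δ1)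
    (hc2 : Multiset.card D2 = n2) (hsum2 : D2.sum = s)
    (hlo2 : ∀ x ∈ D2, d2 ≤ x) (hhi2 : ∀ x ∈ D2, x ≤ Δ2)
    (hL : BigraphicM (LBDS n1 s Δ1 d1) (LBDS n2 s Δ2 d2)) :
    BigraphicM D1 D2 := by
  have hL' : BG (Multiset.card (LBDS n1 s Δ1 d1)) (Multiset.card (LBDS n2 s Δ2 d2))
      (LBDS n1 s Δ1 d1) (LBDS n2 s Δ2 d2) := hL
  have h1 := LBDS_strip hd1 hn1 hs1 hs1' hL'
  have h2 := h1.swap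
  have h3 := LBDS_strip hd2 hn2 hs2 hs2' h2
  have h4 := h3.swap
  have h5 : BG n1 n2 D1 (ext n2 s Δ2 d2) :=
    main_ind hd1 hn1 _ h4 (n1 * (Δ1 * Δ1) + 1) D1
      (Nat.lt_succ_of_le (Nat.sub_le _ _)) hc1 hsum1 hlo1 hhi1
  have h6 := h5.swap
  have h7 : BG n2 n1 D2 D1 :=
    main_ind hd2 hn2 _ h6 (n2 * (Δ2 * Δ2) + 1) D2
      (Nat.lt_succ_of_le (Nat.sub_le _ _)) hc2 hsum2 hlo2 hhi2
  have h8 := h7.swap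
  rw [← hc1, ← hc2] at h8
  exact h8
end

section
/- Let n1, n2 be positive integers, Σ a nonnegative integer, and d1 < Δ1, d2 < Δ2 nonnegative integers with n1·d1 ≤ Σ ≤ n1·Δ1, n2·d2 ≤ Σ ≤ n2·Δ2, Δ1 ≤ n2 and Δ2 ≤ n1. Then the pair (LBDS(n1, Σ, Δ1, d1), LBDS(n2, Σ, Δ2, d2)) is bigraphic if and only if the Gale–Ryser inequalities for this pair hold for k = ⌊(Σ − n1·d1)/(Δ1 − d1)⌋ and for k = ⌈(Σ − n1·d1)/(Δ1 − d1)⌉. -/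
/-- The `k`-th Gale–Ryser inequality for the pair `(D1, D2)`: the sum of the `k`
largest entries of `D1` is at most `∑_{d ∈ D2} min k d`. -/
def GaleRyserIneq (D1 D2 : Multiset ℕ) (k : ℕ) : Prop :=
  ((Multiset.sort D1 (· ≤ ·)).reverse.take k).sum ≤ (D2.map (fun d => min k d)).sum


namespace GR10

def topSum (k : ℕ) (M : Multiset ℕ) : ℕ := ((Multiset.sort M (· ≤ ·)).reverse.take k).sum

lemma topSum_def : ∀ k M, topSum k M = ((Multiset.sort M (· ≤ ·)).reverse.take k).sum :=
  fun _ _ => rfl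

lemma topSum_zero : ∀ M : Multiset ℕ, topSum 0 M = 0 := fun _ => rfl

lemma sum_map_le_sum_map' : ∀ {α : Type} (s : Multiset α) (f g : α → ℕ),
    (∀ x ∈ s, f x ≤ g x) → (s.map f).sum ≤ (s.map g).sum :=
  fun s f g h => Multiset.sum_map_le_sum_map f g h


lemma sum_sort (M : Multiset ℕ) : (Multiset.sort M (· ≤ ·)).sum = M.sum := by
  rw [← Multiset.sum_coe, Multiset.sort_eq]

lemma exists_max {M : Multiset ℕ} (h : M ≠ 0) : ∃ d ∈ M, ∀ x ∈ M, x ≤ d := by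
  obtain ⟨d, hd, hmax⟩ := M.toFinset.exists_max_image id (by
    rwa [Multiset.toFinset_nonempty])
  exact ⟨d, Multiset.mem_toFinset.1 hd, fun x hx => hmax x (Multiset.mem_toFinset.2 hx)⟩

lemma topSum_of_card_le {k : ℕ} {M : Multiset ℕ} (h : Multiset.card M ≤ k) :
    topSum k M = M.sum := by
  unfold topSum
  rw [List.take_of_length_le (by simpa using h), List.sum_reverse, sum_sort]

lemma topSum_le_sum (k : ℕ) (M : Multiset ℕ) : topSum k M ≤ M.sum := by
  unfold topSum
  calc ((Multiset.sort M (· ≤ ·)).reverse.take k).sum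
      ≤ ((Multiset.sort M (· ≤ ·)).reverse.take k).sum
        + ((Multiset.sort M (· ≤ ·)).reverse.drop k).sum := Nat.le_add_right _ _
    _ = M.sum := by rw [← List.sum_append, List.take_append_drop, List.sum_reverse, sum_sort]

lemma exists_topSum (k : ℕ) (M : Multiset ℕ) :
    ∃ T : Multiset ℕ, T ≤ M ∧ Multiset.card T = min k (Multiset.card M)
      ∧ T.sum = topSum k M := by
  refine ⟨((Multiset.sort M (· ≤ ·)).reverse.take k : List ℕ), ?_, ?_, ?_⟩
  · have : ((Multiset.sort M (· ≤ ·)).reverse.take k : Multiset ℕ)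
        ≤ ((Multiset.sort M (· ≤ ·) : List ℕ) : Multiset ℕ) :=
      Multiset.coe_le.2 ((List.take_sublist _ _).subperm.trans
        (List.reverse_perm _).subperm)
    simpa [Multiset.sort_eq] using this
  · simp [min_comm]
  · rfl

lemma sort_erase_max {M : Multiset ℕ} {d : ℕ} (hd : d ∈ M) (hmax : ∀ x ∈ M, x ≤ d) :
    Multiset.sort M (· ≤ ·) = Multiset.sort (M.erase d) (· ≤ ·) ++ [d] := by
  have hperm : ((Multiset.sort (M.erase d) (· ≤ ·) ++ [d] : List ℕ) : Multiset ℕ) = M := by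
    rw [← Multiset.coe_add, Multiset.sort_eq]
    conv_rhs => rw [← Multiset.cons_erase hd]
    rw [← Multiset.singleton_add, add_comm]; rfl
  have hs2 : List.Pairwise (· ≤ ·) (Multiset.sort (M.erase d) (· ≤ ·) ++ [d]) := by
    rw [List.pairwise_append]
    refine ⟨Multiset.pairwise_sort _ _, by simp, ?_⟩
    intro x hx y hy
    simp at hy; subst hy
    exact hmax x (Multiset.mem_of_mem_erase (by rwa [← Multiset.mem_sort (r := (· ≤ ·))] ))
  refine List.Perm.eq_of_pairwise' (Multiset.pairwise_sort _ _) hs2 ?_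
  rw [← Multiset.coe_eq_coe, Multiset.sort_eq, hperm]

lemma topSum_cons_max {M : Multiset ℕ} {d : ℕ} (hd : d ∈ M) (hmax : ∀ x ∈ M, x ≤ d)
    (k : ℕ) : topSum (k + 1) M = d + topSum k (M.erase d) := by
  unfold topSum
  rw [sort_erase_max hd hmax, List.reverse_append]
  simp

lemma topSum_le_of_le {T M : Multiset ℕ} {k : ℕ} (hTM : T ≤ M) (hcard : Multiset.card T ≤ k) :
    T.sum ≤ topSum k M := by
  induction k generalizing T M with
  | zero => interval_cases h : Multiset.card T <;> simp_all [Multiset.card_eq_zero.1 h]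
  | succ k ih =>
    rcases eq_or_ne T 0 with rfl | hT
    · simp
    · obtain ⟨a, haT, hamax⟩ := exists_max hT
      have hM : M ≠ 0 := fun h => hT (Multiset.le_zero.1 (h ▸ hTM))
      obtain ⟨d, hdM, hdmax⟩ := exists_max hM
      have had : a ≤ d := hdmax a (Multiset.mem_of_le hTM haT)
      have hsub : T.erase a ≤ M.erase d := by
        rw [Multiset.le_iff_count]
        intro x
        have hc := Multiset.le_iff_count.1 hTM x
        by_cases hxa : x = a
        · subst hxa
          by_cases hxd : x = d
          · subst hxd
            rw [Multiset.count_erase_self, Multiset.count_erase_self]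
            omega
          · rw [Multiset.count_erase_self, Multiset.count_erase_of_ne hxd]
            omega
        · by_cases hxd : x = d
          · subst hxd
            have hdT : x ∉ T := fun hdT => hxa (le_antisymm (hamax x hdT) had)
            rw [Multiset.count_erase_of_ne hxa, Multiset.count_eq_zero.2 hdT]
            exact Nat.zero_le _
          · rw [Multiset.count_erase_of_ne hxa, Multiset.count_erase_of_ne hxd]
            exact hc
      have hcard' : Multiset.card (T.erase a) ≤ k := by
        rw [Multiset.card_erase_of_mem haT, Nat.pred_eq_sub_one]
        have := Multiset.card_pos.2 hT
        omega
      calc T.sum = a + (T.erase a).sum := by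
            rw [← Multiset.sum_cons, Multiset.cons_erase haT]
        _ ≤ d + topSum k (M.erase d) := Nat.add_le_add had (ih hsub hcard')
        _ = topSum (k + 1) M := (topSum_cons_max hdM hdmax k).symm

lemma topSum_mono_left {M' M : Multiset ℕ} (h : M' ≤ M) (k : ℕ) :
    topSum k M' ≤ topSum k M := by
  obtain ⟨T, hTM, hcard, hsum⟩ := exists_topSum k M'
  rw [← hsum]
  exact topSum_le_of_le (le_trans hTM h) (by omega)


section core
variable {ι : Type} [Fintype ι] [DecidableEq ι]

lemma exists_top_subset (c : ι → ℕ) :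
    ∀ (d : ℕ) (U : Finset ι), d ≤ U.card →
      ∃ S ⊆ U, S.card = d ∧ ∀ v ∈ S, ∀ w ∈ U, w ∉ S → c w ≤ c v := by
  intro d
  induction d with
  | zero => exact fun U _ => ⟨∅, Finset.empty_subset _, rfl, by simp⟩
  | succ d ih =>
    intro U hU
    have hne : U.Nonempty := Finset.card_pos.1 (by omega)
    obtain ⟨v0, hv0, hv0max⟩ := U.exists_max_image c hne
    obtain ⟨S', hS'sub, hS'card, hS'max⟩ := ih (U.erase v0) (by
      rw [Finset.card_erase_of_mem hv0]; omega)
    refine ⟨insert v0 S', ?_, ?_, ?_⟩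
    · intro x hx
      rcases Finset.mem_insert.1 hx with rfl | hx
      · exact hv0
      · exact Finset.mem_of_mem_erase (hS'sub hx)
    · rw [Finset.card_insert_of_notMem (fun h => (Finset.mem_erase.1 (hS'sub h)).1 rfl), hS'card]
    · intro v hv w hw hwS
      rcases Finset.mem_insert.1 hv with rfl | hv
      · exact hv0max w hw
      · refine hS'max v hv w (Finset.mem_erase.2 ⟨?_, hw⟩) ?_
        · rintro rfl; exact hwS (Finset.mem_insert_self _ _)
        · exact fun h => hwS (Finset.mem_insert_of_mem h)

theorem core_exists : ∀ (n : ℕ) (D : Multiset ℕ) (c : ι → ℕ), Multiset.card D = n →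
    D.sum = ∑ v, c v →
    (∀ k, topSum k D ≤ ∑ v, min k (c v)) →
    ∃ R : Multiset (Finset ι), R.map Finset.card = D ∧
      ∀ v, R.countP (fun s => v ∈ s) = c v := by
  intro n
  induction n with
  | zero =>
    intro D c hcard hsum _
    rw [Multiset.card_eq_zero] at hcard
    subst hcard
    refine ⟨0, by simp, fun v => ?_⟩
    simp only [Multiset.countP_zero]
    exact ((Finset.sum_eq_zero_iff).1 (by simpa using hsum.symm) v (Finset.mem_univ v)).symm
  | succ n ih =>
    intro D c hcard hsum hGR
    have hD : D ≠ 0 := by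
      intro h; rw [h] at hcard; simp at hcard
    obtain ⟨d, hdD, hdmax⟩ := exists_max hD
    -- number of positive columns is at least d
    have hmin1 : ∀ v : ι, min 1 (c v) = if 1 ≤ c v then 1 else 0 := fun v => by
      simp only [Nat.min_def]; split_ifs <;> omega
    have hd1 : d ≤ (Finset.univ.filter (fun v => 1 ≤ c v)).card := by
      have h1 := hGR 1
      rw [show (1 : ℕ) = 0 + 1 from rfl, topSum_cons_max hdD hdmax, topSum_zero] at h1
      calc d = d + 0 := rfl
        _ ≤ ∑ v, min 1 (c v) := h1
        _ = (Finset.univ.filter (fun v => 1 ≤ c v)).card := by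
            rw [Finset.sum_congr rfl fun v _ => hmin1 v, Finset.sum_boole]; simp
    obtain ⟨S, -, hScard, hSmax⟩ := exists_top_subset c d Finset.univ
      (le_trans hd1 (Finset.card_filter_le _ _))
    have hSmax' : ∀ v ∈ S, ∀ w, w ∉ S → c w ≤ c v := fun v hv w hw =>
      hSmax v hv w (Finset.mem_univ w) hw
    have hpos : ∀ v ∈ S, 1 ≤ c v := by
      intro v hv
      by_contra hc
      have hsub : Finset.univ.filter (fun v => 1 ≤ c v) ⊆ S.erase v := by
        intro w hw
        rw [Finset.mem_filter] at hw
        refine Finset.mem_erase.2 ⟨?_, ?_⟩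
        · rintro rfl; omega
        · by_contra hwS
          have := hSmax' v hv w hwS
          omega
      have hcle := Finset.card_le_card hsub
      rw [Finset.card_erase_of_mem hv, hScard] at hcle
      have hd0 : 1 ≤ d := by rw [← hScard]; exact Finset.card_pos.2 ⟨v, hv⟩
      omega
    set c' : ι → ℕ := fun v => c v - (if v ∈ S then 1 else 0) with hc'
    set D' := D.erase d with hD'
    have hcv : ∀ v, c v = c' v + (if v ∈ S then 1 else 0) := by
      intro v
      by_cases hv : v ∈ S
      · have := hpos v hv; simp only [hc', if_pos hv]; omega
      · simp [hc', hv]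
    have hsumS : ∀ (f : ι → ℕ), (∑ v, (f v + if v ∈ S then 1 else 0)) = (∑ v, f v) + d := by
      intro f
      rw [Finset.sum_add_distrib, Finset.sum_ite_mem, Finset.univ_inter,
        Finset.sum_const, smul_eq_mul, mul_one, hScard]
    have hsum' : D'.sum = ∑ v, c' v := by
      have h1 : D.sum = d + D'.sum := by
        rw [hD', ← Multiset.sum_cons, Multiset.cons_erase hdD]
      have h2 : (∑ v, c v) = (∑ v, c' v) + d := by
        rw [Finset.sum_congr rfl fun v _ => hcv v]; exact hsumS c'
      omega
    have hcard' : Multiset.card D' = n := by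
      rw [hD', Multiset.card_erase_of_mem hdD, hcard]; rfl
    have hGR' : ∀ k, topSum k D' ≤ ∑ v, min k (c' v) := by
      intro k
      have hkey : ∀ v, min k (c v) = min k (c' v) + (if v ∈ S ∧ c v ≤ k then 1 else 0) := by
        intro v
        by_cases hv : v ∈ S
        · have := hpos v hv
          simp only [hc', if_pos hv]
          by_cases hck : c v ≤ k <;> simp [hck, hv] <;> omega
        · simp [hc', hv]
      have hsplit : (∑ v, min k (c v)) = (∑ v, min k (c' v))
          + (S.filter (fun v => c v ≤ k)).card := by
        rw [Finset.sum_congr rfl fun v _ => hkey v, Finset.sum_add_distrib, Finset.sum_boole]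
        congr 1
        simp only [Nat.cast_id]
        congr 1
        ext v
        simp [and_comm]
      by_cases hA : ∃ w, w ∉ S ∧ k + 1 ≤ c w
      · obtain ⟨w, hwS, hwc⟩ := hA
        have ht : (S.filter (fun v => c v ≤ k)).card = 0 := by
          rw [Finset.card_eq_zero, Finset.filter_eq_empty_iff]
          intro v hv
          have := hSmax' v hv w hwS
          omega
        have hmono := le_trans (topSum_mono_left
          (show D' ≤ D from hD' ▸ Multiset.erase_le d D) k) (hGR k)
        omega
      · push_neg at hA
        have hbig : Finset.univ.filter (fun v => k + 1 ≤ c v) ⊆ S := by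
          intro w hw
          rw [Finset.mem_filter] at hw
          by_contra hwS
          exact absurd hw.2 (by have := hA w hwS; omega)
        have hm : (S.filter (fun v => k + 1 ≤ c v)).card
            = (Finset.univ.filter (fun v => k + 1 ≤ c v)).card := by
          congr 1
          apply Finset.Subset.antisymm
          · exact Finset.filter_subset_filter _ (Finset.subset_univ S) |>.trans (le_refl _)
          · intro w hw
            rw [Finset.mem_filter] at hw ⊢
            exact ⟨hbig (Finset.mem_filter.2 ⟨Finset.mem_univ w, hw.2⟩), hw.2⟩
        have hsplitS : (S.filter (fun v => c v ≤ k)).card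
            + (S.filter (fun v => k + 1 ≤ c v)).card = d := by
          have hfc : S.filter (fun v => ¬ c v ≤ k) = S.filter (fun v => k + 1 ≤ c v) :=
            Finset.filter_congr (fun v _ => by constructor <;> (intro; omega))
          have := Finset.card_filter_add_card_filter_not
            (s := S) (p := fun v => c v ≤ k)
          rw [hfc] at this
          rw [this, hScard]
        have hstep : (∑ v, min (k+1) (c v)) = (∑ v, min k (c v))
            + (Finset.univ.filter (fun v => k + 1 ≤ c v)).card := by
          have : ∀ v, min (k+1) (c v) = min k (c v) + (if k + 1 ≤ c v then 1 else 0) :=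
            fun v => by simp only [Nat.min_def]; split_ifs <;> omega
          rw [Finset.sum_congr rfl fun v _ => this v, Finset.sum_add_distrib, Finset.sum_boole]
          simp
        have hk1 := hGR (k+1)
        rw [topSum_cons_max hdD hdmax k, ← hD'] at hk1
        omega
    obtain ⟨R', hR'card, hR'count⟩ := ih D' c' hcard' hsum' hGR'
    refine ⟨S ::ₘ R', ?_, ?_⟩
    · rw [Multiset.map_cons, hR'card, hScard, hD', Multiset.cons_erase hdD]
    · intro v
      rw [Multiset.countP_cons, hR'count]
      by_cases hv : v ∈ S
      · have := hpos v hv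
        simp only [hc', if_pos hv]
        omega
      · simp [hc', hv]
end core

lemma lift_le_map {α β : Type} [DecidableEq α] [DecidableEq β] {f : α → β} :
    ∀ {T : Multiset β} {s : Finset α}, T ≤ s.val.map f → ∃ S ⊆ s, S.val.map f = T := by
  intro T
  induction T using Multiset.induction with
  | empty => exact fun _ => ⟨∅, Finset.empty_subset _, rfl⟩
  | cons a T ihT =>
    intro s h
    have ha : a ∈ s.val.map f := Multiset.mem_of_le h (Multiset.mem_cons_self a T)
    obtain ⟨u, hu, hfu⟩ := Multiset.mem_map.1 ha
    have hs : s.val = u ::ₘ (s.erase u).val := by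
      rw [Finset.erase_val, Multiset.cons_erase hu]
    have hmap : Multiset.map f s.val = a ::ₘ Multiset.map f (s.erase u).val := by
      conv_lhs => rw [hs]
      rw [Multiset.map_cons, hfu]
    have hT : T ≤ (s.erase u).val.map f :=
      (Multiset.cons_le_cons_iff a).1 (by rw [← hmap]; exact h)
    obtain ⟨S', hS'sub, hS'map⟩ := ihT hT
    have huS' : u ∉ S' := fun h' => (Finset.mem_erase.1 (hS'sub h')).1 rfl
    refine ⟨insert u S', ?_, ?_⟩
    · intro x hx
      rcases Finset.mem_insert.1 hx with rfl | hx
      · exact hu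
      · exact Finset.mem_of_mem_erase (hS'sub hx)
    · rw [Finset.insert_val, Multiset.ndinsert_of_notMem huS', Multiset.map_cons, hS'map, hfu]

theorem necessity {D1 D2 : Multiset ℕ} (h : BigraphicM D1 D2) (k : ℕ) :
    topSum k D1 ≤ (D2.map (fun x => min k x)).sum := by
  obtain ⟨E, h1, h2⟩ := h
  set deg1 : Fin (Multiset.card D1) → ℕ := fun u => (E.filter (fun p => p.1 = u)).card with hdeg1
  set deg2 : Fin (Multiset.card D2) → ℕ := fun v => (E.filter (fun p => p.2 = v)).card with hdeg2
  obtain ⟨T, hTle, hTcard, hTsum⟩ := exists_topSum k D1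
  have hTle' : T ≤ Finset.univ.val.map deg1 := by rwa [← h1]
  obtain ⟨S, -, hSmap⟩ := lift_le_map hTle'
  have hScard : S.card ≤ k := by
    have : S.card = Multiset.card T := by rw [← hSmap, Multiset.card_map]; rfl
    omega
  have hSsum : ∑ u ∈ S, deg1 u = topSum k D1 := by
    rw [← hTsum, ← hSmap]
    rfl
  have e1 : ∑ u ∈ S, deg1 u = (E.filter (fun p => p.1 ∈ S)).card := by
    rw [show E.filter (fun p => p.1 ∈ S) = S.biUnion (fun u => E.filter (fun p => p.1 = u)) by
      ext p; simp [Finset.mem_biUnion]; tauto]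
    rw [Finset.card_biUnion]
    intro u _ u' _ huu'
    simp only [Finset.disjoint_left, Finset.mem_filter]
    rintro p ⟨-, rfl⟩ ⟨-, h⟩
    exact huu' h
  have e2 : (E.filter (fun p => p.1 ∈ S)).card
      = ∑ v, (E.filter (fun p => p.1 ∈ S ∧ p.2 = v)).card := by
    rw [show E.filter (fun p => p.1 ∈ S)
        = Finset.univ.biUnion (fun v => E.filter (fun p => p.1 ∈ S ∧ p.2 = v)) by
      ext p; simp [Finset.mem_biUnion]]
    rw [Finset.card_biUnion]
    intro v _ v' _ hvv'
    simp only [Finset.disjoint_left, Finset.mem_filter]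
    rintro p ⟨-, -, rfl⟩ ⟨-, -, h⟩
    exact hvv' h
  have e3 : ∀ v, (E.filter (fun p => p.1 ∈ S ∧ p.2 = v)).card ≤ min k (deg2 v) := by
    intro v
    refine le_min ?_ ?_
    · calc (E.filter (fun p => p.1 ∈ S ∧ p.2 = v)).card ≤ S.card := by
            apply Finset.card_le_card_of_injOn (fun p => p.1)
            · intro p hp
              exact (Finset.mem_filter.1 hp).2.1
            · rintro p hp q hq hpq
              have hp2 := (Finset.mem_filter.1 hp).2.2
              have hq2 := (Finset.mem_filter.1 hq).2.2
              exact Prod.ext hpq (hp2.trans hq2.symm)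
        _ ≤ k := hScard
    · exact Finset.card_le_card (fun p hp => Finset.mem_filter.2
        ⟨(Finset.mem_filter.1 hp).1, (Finset.mem_filter.1 hp).2.2⟩)
  have e4 : (D2.map (fun x => min k x)).sum = ∑ v, min k (deg2 v) := by
    have := congrArg (fun M : Multiset ℕ => (M.map (fun x => min k x)).sum) h2
    simp only [Multiset.map_map] at this
    rw [this]
    rfl
  rw [← hSsum, e1, e2, e4]
  exact Finset.sum_le_sum (fun v _ => e3 v)

lemma enum {α : Type} (n : ℕ) (M : Multiset α) (h : Multiset.card M = n) :
    ∃ f : Fin n → α, Finset.univ.val.map f = M := by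
  obtain ⟨l, rfl⟩ : ∃ l : List α, (l : Multiset α) = M := ⟨M.toList, Multiset.coe_toList M⟩
  have hn : l.length = n := by simpa using h
  subst hn
  refine ⟨l.get, ?_⟩
  rw [Fin.univ_val_map]
  exact congrArg _ (List.ofFn_get l)

theorem sufficiency {D1 D2 : Multiset ℕ} (hsum : D1.sum = D2.sum)
    (hGR : ∀ k, topSum k D1 ≤ (D2.map (fun x => min k x)).sum) : BigraphicM D1 D2 := by
  obtain ⟨c, hc⟩ := enum (Multiset.card D2) D2 rfl
  have hgc : ∀ k, (D2.map (fun x => min k x)).sum = ∑ v, min k (c v) := by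
    intro k
    have := congrArg (fun M : Multiset ℕ => (M.map (fun x => min k x)).sum) hc.symm
    simp only [Multiset.map_map] at this
    rw [this]
    rfl
  have hsum2 : D2.sum = ∑ v, c v := by
    have := congrArg Multiset.sum hc.symm
    rw [this]
    rfl
  obtain ⟨R, hRcard, hRcount⟩ := core_exists (Multiset.card D1) D1 c rfl
    (hsum.trans hsum2) (fun k => (hGR k).trans_eq (hgc k))
  have hRc : Multiset.card R = Multiset.card D1 := by rw [← hRcard, Multiset.card_map]
  obtain ⟨g, hg⟩ := enum (Multiset.card D1) R hRc
  refine ⟨Finset.univ.filter (fun p => p.2 ∈ g p.1), ?_, ?_⟩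
  · have hrow : ∀ u, ((Finset.univ.filter (fun p : Fin (Multiset.card D1) ×
        Fin (Multiset.card D2) => p.2 ∈ g p.1)).filter (fun p => p.1 = u))
        = {u} ×ˢ (g u) := by
      intro u
      ext ⟨a, b⟩
      simp only [Finset.mem_filter, Finset.mem_univ, true_and, Finset.mem_product,
        Finset.mem_singleton]
      constructor
      · rintro ⟨hb, rfl⟩; exact ⟨rfl, hb⟩
      · rintro ⟨rfl, hb⟩; exact ⟨hb, rfl⟩
    calc D1 = R.map Finset.card := hRcard.symm
      _ = (Finset.univ.val.map g).map Finset.card := by rw [hg]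
      _ = Finset.univ.val.map (fun u => Finset.card (g u)) := Multiset.map_map _ _ _
      _ = _ := by
          apply Multiset.map_congr rfl
          intro u _
          rw [hrow u, Finset.singleton_product, Finset.card_map]
  · have hcol : ∀ v, ((Finset.univ.filter (fun p : Fin (Multiset.card D1) ×
        Fin (Multiset.card D2) => p.2 ∈ g p.1)).filter (fun p => p.2 = v))
        = (Finset.univ.filter (fun u => v ∈ g u)) ×ˢ {v} := by
      intro v
      ext ⟨a, b⟩
      simp only [Finset.mem_filter, Finset.mem_univ, true_and, Finset.mem_product,
        Finset.mem_singleton]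
      constructor
      · rintro ⟨hb, rfl⟩; exact ⟨hb, rfl⟩
      · rintro ⟨hb, rfl⟩; exact ⟨hb, rfl⟩
    calc D2 = Finset.univ.val.map c := hc.symm
      _ = _ := by
          apply Multiset.map_congr rfl
          intro v _
          rw [hcol v, Finset.product_singleton, Finset.card_map]
          rw [← hRcount v, ← hg, Multiset.countP_map]
          rfl

-- take-sum lemmas
section takes
variable (a b X y z : ℕ)

lemma ts1 {k : ℕ} (h : k ≤ a) :
    ((List.replicate a X ++ y :: List.replicate b z).take k).sum = k * X := by
  rw [List.take_append, List.length_replicate,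
    Nat.sub_eq_zero_of_le h, List.take_zero, List.append_nil, List.take_replicate,
    min_eq_left h, List.sum_replicate, smul_eq_mul]

lemma ts2 {k : ℕ} (h1 : a < k) (h2 : k ≤ a + 1 + b) :
    ((List.replicate a X ++ y :: List.replicate b z).take k).sum
      = a * X + y + (k - a - 1) * z := by
  rw [List.take_append, List.length_replicate, List.take_replicate,
    min_eq_right (by omega), show k - a = (k - a - 1) + 1 by omega, List.take_succ_cons,
    List.take_replicate, min_eq_left (by omega), List.sum_append, List.sum_replicate,
    List.sum_cons, List.sum_replicate, smul_eq_mul, smul_eq_mul]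
  have h3 : k - a - 1 + 1 - 1 = k - a - 1 := by omega
  rw [h3]
  ring

lemma ts3 {k : ℕ} (h : a + 1 + b ≤ k) :
    ((List.replicate a X ++ y :: List.replicate b z).take k).sum = a * X + y + b * z := by
  rw [List.take_of_length_le (by simp; omega), List.sum_append, List.sum_replicate,
    List.sum_cons, List.sum_replicate, smul_eq_mul, smul_eq_mul]
  ring
end takes

-- sorted structure of a (replicate + cons + replicate) multiset
lemma sort_lbds_shape (t d r kk Δ : ℕ) (h1 : t = 0 ∨ d ≤ r) (h2 : r ≤ Δ) (h3 : d ≤ Δ) :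
    Multiset.sort (Multiset.replicate kk Δ + (r ::ₘ Multiset.replicate t d)) (· ≤ ·)
      = List.replicate t d ++ r :: List.replicate kk Δ := by
  have hperm : ((List.replicate t d ++ r :: List.replicate kk Δ : List ℕ) : Multiset ℕ)
      = Multiset.replicate kk Δ + (r ::ₘ Multiset.replicate t d) := by
    rw [← Multiset.coe_add]
    push_cast [Multiset.coe_replicate]
    rw [← Multiset.cons_coe, Multiset.coe_replicate]
    rw [add_comm (Multiset.replicate t d) (r ::ₘ Multiset.replicate kk Δ),
      add_comm (Multiset.replicate kk Δ) (r ::ₘ Multiset.replicate t d),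
      Multiset.cons_add, Multiset.cons_add, add_comm]
  have hsorted : List.Pairwise (· ≤ ·) (List.replicate t d ++ r :: List.replicate kk Δ) := by
    rw [List.pairwise_append]
    refine ⟨(List.pairwise_replicate).2 (Or.inr (le_refl d)), ?_, ?_⟩
    · rw [List.pairwise_cons]
      refine ⟨fun x hx => ?_, (List.pairwise_replicate).2 (Or.inr (le_refl Δ))⟩
      rw [List.eq_of_mem_replicate hx]
      exact h2
    · intro x hx y hy
      rw [List.eq_of_mem_replicate hx]
      rcases List.mem_cons.1 hy with rfl | hy
      · rcases h1 with h1 | h1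
        · exact absurd hx (by simp [h1])
        · exact h1
      · rw [List.eq_of_mem_replicate hy]; exact h3
  refine List.Perm.eq_of_pairwise' (Multiset.pairwise_sort _ _) hsorted ?_
  rw [← Multiset.coe_eq_coe, Multiset.sort_eq, hperm]

lemma topSum_lbds_shape (t d r kk Δ : ℕ) (h1 : t = 0 ∨ d ≤ r) (h2 : r ≤ Δ) (h3 : d ≤ Δ)
    (k : ℕ) :
    topSum k (Multiset.replicate kk Δ + (r ::ₘ Multiset.replicate t d))
      = ((List.replicate kk Δ ++ r :: List.replicate t d).take k).sum := by
  rw [topSum_def, sort_lbds_shape t d r kk Δ h1 h2 h3]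
  congr 1
  rw [List.reverse_append, List.reverse_cons, List.reverse_replicate, List.reverse_replicate]
  simp

-- pointwise concavity of min
lemma min_conc_pt (a k b x : ℕ) (hak : a ≤ k) (hkb : k ≤ b) :
    (b - k) * min a x + (k - a) * min b x ≤ (b - a) * min k x := by
  obtain ⟨v, rfl⟩ : ∃ v, k = a + v := ⟨k - a, by omega⟩
  obtain ⟨u, rfl⟩ : ∃ u, b = (a + v) + u := ⟨b - (a + v), by omega⟩
  rw [show a + v + u - (a + v) = u by omega, show a + v - a = v by omega,
    show a + v + u - a = u + v by omega]
  rcases le_total x a with hxa | hxa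
  · rw [min_eq_right hxa, min_eq_right (by omega), min_eq_right (by omega)]
    nlinarith
  · rcases le_total x (a + v) with hxk | hxk
    · rw [min_eq_left hxa, min_eq_right (by omega), min_eq_right hxk]
      nlinarith
    · rcases le_total x (a + v + u) with hxb | hxb
      · rw [min_eq_left hxa, min_eq_right hxb, min_eq_left hxk]
        nlinarith
      · rw [min_eq_left hxa, min_eq_left (by omega), min_eq_left hxk]
        nlinarith

lemma g_conc (D2 : Multiset ℕ) (a k b : ℕ) (hak : a ≤ k) (hkb : k ≤ b) :
    (b - k) * (D2.map (fun x => min a x)).sum + (k - a) * (D2.map (fun x => min b x)).sum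
      ≤ (b - a) * (D2.map (fun x => min k x)).sum := by
  rw [← Multiset.sum_map_mul_left, ← Multiset.sum_map_mul_left, ← Multiset.sum_map_mul_left,
    ← Multiset.sum_map_add]
  exact sum_map_le_sum_map' _ _ _ (fun x _ => min_conc_pt a k b x hak hkb)

lemma g_full (D2 : Multiset ℕ) (k : ℕ) (h : ∀ y ∈ D2, y ≤ k) :
    (D2.map (fun x => min k x)).sum = D2.sum := by
  rw [Multiset.map_congr rfl (fun x hx => min_eq_right (h x hx)), Multiset.map_id']

/-- Structure facts about `LBDS`. -/
lemma lbds_main (n s Δ d : ℕ) (hn : 0 < n) (hd : d < Δ) (h1 : n * d ≤ s) (h2 : s ≤ n * Δ) :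
    ∃ k1 t r : ℕ,
      k1 = (s - n * d) / (Δ - d) ∧
      LBDS n s Δ d = Multiset.replicate k1 Δ + (r ::ₘ Multiset.replicate t d) ∧
      (t = 0 ∨ d ≤ r) ∧ r ≤ Δ ∧
      k1 * Δ + r + t * d = s ∧
      k1 ≤ n ∧
      (k1 < n → k1 + 1 + t = n ∧ d ≤ r) ∧
      (k1 = n → t = 0 ∧ r = 0) ∧
      ((s - n * d + (Δ - d) - 1) / (Δ - d) = k1 ∧ (k1 = n ∨ r = d) ∨
        (s - n * d + (Δ - d) - 1) / (Δ - d) = k1 + 1 ∧ k1 < n) := by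
  obtain ⟨m, hΔ, hm⟩ : ∃ m, Δ = d + m ∧ 0 < m := ⟨Δ - d, by omega, by omega⟩
  have hm_def : Δ - d = m := by omega
  obtain ⟨k1, hk1_def⟩ : ∃ k1, k1 = (s - n * d) / (Δ - d) := ⟨_, rfl⟩
  obtain ⟨ρ, hρ_def⟩ : ∃ ρ, ρ = (s - n * d) % (Δ - d) := ⟨_, rfl⟩
  obtain ⟨t, ht_def⟩ : ∃ t, t = n - k1 - 1 := ⟨_, rfl⟩
  obtain ⟨r, hr_def⟩ : ∃ r, r = s - k1 * Δ - t * d := ⟨_, rfl⟩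
  have hdm : m * k1 + ρ = s - n * d := by
    rw [hk1_def, hρ_def, ← hm_def]
    exact Nat.div_add_mod _ _
  have hρm : ρ < m := by
    rw [hρ_def, ← hm_def]
    exact Nat.mod_lt _ (by omega)
  have hcm : m * k1 = k1 * m := Nat.mul_comm _ _
  have hnΔ : n * Δ = n * d + n * m := by rw [hΔ, Nat.mul_add]
  have hk1Δ : k1 * Δ = k1 * d + k1 * m := by rw [hΔ, Nat.mul_add]
  have hk1n : k1 ≤ n := by
    rw [hk1_def, hm_def]
    have := Nat.div_le_div_right (c := m) (show s - n * d ≤ n * m by omega)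
    rwa [Nat.mul_div_cancel _ hm] at this
  have hse : s = n * d + k1 * m + ρ := by omega
  -- t * d expansion
  have htd : t * d = n * d - k1 * d - d := by
    rw [ht_def, Nat.sub_mul, Nat.sub_mul, one_mul]
  have hk1d : k1 * d ≤ n * d := Nat.mul_le_mul_right d hk1n
  have hk1m : k1 * m ≤ n * m := Nat.mul_le_mul_right m hk1n
  -- case analysis
  have hmain : (k1 < n ∧ r = d + ρ) ∨ (k1 = n ∧ t = 0 ∧ r = 0 ∧ ρ = 0) := by
    rcases Nat.lt_or_ge k1 n with hc | hc
    · left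
      refine ⟨hc, ?_⟩
      have hd1 : k1 * d + d ≤ n * d := by
        calc k1 * d + d = (k1 + 1) * d := by ring
          _ ≤ n * d := Nat.mul_le_mul_right d (by omega)
      omega
    · right
      have hc' : k1 = n := le_antisymm hk1n hc
      have hρ0 : ρ = 0 := by
        have h3 : k1 * m = n * m := by rw [hc']
        omega
      have ht0 : t = 0 := by omega
      refine ⟨hc', ht0, ?_, hρ0⟩
      have h4 : k1 * d = n * d := by rw [hc']
      omega
  -- k1' computation
  have hk1' : ((s - n * d + (Δ - d) - 1) / (Δ - d) = k1 ∧ ρ = 0) ∨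
      ((s - n * d + (Δ - d) - 1) / (Δ - d) = k1 + 1 ∧ 0 < ρ) := by
    rw [hm_def]
    rcases Nat.eq_zero_or_pos ρ with hρ | hρ
    · left
      refine ⟨?_, hρ⟩
      rw [show s - n * d + m - 1 = m - 1 + m * k1 by omega, Nat.add_mul_div_left _ _ hm,
        Nat.div_eq_of_lt (by omega), Nat.zero_add]
    · right
      refine ⟨?_, hρ⟩
      rw [show s - n * d + m - 1 = ρ - 1 + m * (k1 + 1) by
          have h5 : m * (k1 + 1) = m * k1 + m := by ring
          omega,
        Nat.add_mul_div_left _ _ hm, Nat.div_eq_of_lt (by omega), Nat.zero_add]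
  have hLB : LBDS n s Δ d = Multiset.replicate k1 Δ + (r ::ₘ Multiset.replicate t d) := by
    rw [LBDS, ← hk1_def, ← ht_def, ← hr_def]
  refine ⟨k1, t, r, hk1_def, hLB, ?_, ?_, ?_, hk1n, ?_, ?_, ?_⟩
  · rcases hmain with ⟨-, hr⟩ | ⟨-, ht0, -, -⟩
    · right; omega
    · left; exact ht0
  · rcases hmain with ⟨-, hr⟩ | ⟨-, -, hr, -⟩ <;> omega
  · rcases hmain with ⟨hc, hr⟩ | ⟨hc, ht0, hr, hρ0⟩
    · have hd1 : k1 * d + d ≤ n * d := by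
        calc k1 * d + d = (k1 + 1) * d := by ring
          _ ≤ n * d := Nat.mul_le_mul_right d (by omega)
      omega
    · have : k1 * d = n * d := by rw [hc]
      have : k1 * m = n * m := by rw [hc]
      omega
  · intro hc
    rcases hmain with ⟨-, hr⟩ | ⟨hc', -⟩
    · constructor <;> omega
    · omega
  · intro hc
    rcases hmain with ⟨hc', -⟩ | ⟨-, ht0, hr, -⟩
    · omega
    · exact ⟨ht0, hr⟩
  · rcases hk1' with ⟨hk, hρ⟩ | ⟨hk, hρ⟩
    · left
      refine ⟨hk, ?_⟩
      rcases hmain with ⟨-, hr⟩ | ⟨hc, -⟩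
      · right; omega
      · left; exact hc
    · right
      refine ⟨hk, ?_⟩
      rcases hmain with ⟨hc, -⟩ | ⟨-, -, -, hρ0⟩
      · exact hc
      · omega

lemma lbds_sum (n s Δ d : ℕ) (hn : 0 < n) (hd : d < Δ) (h1 : n * d ≤ s) (h2 : s ≤ n * Δ) :
    (LBDS n s Δ d).sum = s := by
  obtain ⟨k1, t, r, -, hLB, -, -, hsum, -⟩ := lbds_main n s Δ d hn hd h1 h2
  rw [hLB, Multiset.sum_add, Multiset.sum_cons, Multiset.sum_replicate, Multiset.sum_replicate,
    smul_eq_mul, smul_eq_mul]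
  omega

lemma lbds_ub (n s Δ d : ℕ) (hn : 0 < n) (hd : d < Δ) (h1 : n * d ≤ s) (h2 : s ≤ n * Δ) :
    ∀ y ∈ LBDS n s Δ d, y ≤ Δ := by
  obtain ⟨k1, t, r, -, hLB, -, hr, -⟩ := lbds_main n s Δ d hn hd h1 h2
  intro y hy
  rw [hLB, Multiset.mem_add, Multiset.mem_cons] at hy
  rcases hy with hy | hy | hy
  · rw [Multiset.eq_of_mem_replicate hy]
  · omega
  · rw [Multiset.eq_of_mem_replicate hy]; omega

/-- The cancellation step of the chord argument. -/
lemma chord_cancel (A d1 j p ga gb gk : ℕ) (hA : A ≤ ga) (hgb : A + (j + p) * d1 ≤ gb)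
    (hp : 0 < j + p) (hconc : p * ga + j * gb ≤ (j + p) * gk) : A + j * d1 ≤ gk := by
  have h1 : (j + p) * (A + j * d1) ≤ (j + p) * gk := by
    calc (j + p) * (A + j * d1) = p * A + j * (A + (j + p) * d1) := by ring
      _ ≤ p * ga + j * gb := Nat.add_le_add (Nat.mul_le_mul_left p hA) (Nat.mul_le_mul_left j hgb)
      _ ≤ (j + p) * gk := hconc
  exact Nat.le_of_mul_le_mul_left h1 hp

theorem lbds_reduce (n s Δ d Δ2 : ℕ) (hn : 0 < n) (hd : d < Δ)
    (h1 : n * d ≤ s) (h2 : s ≤ n * Δ) (D2 : Multiset ℕ)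
    (hD2sum : D2.sum = s) (hD2ub : ∀ y ∈ D2, y ≤ Δ2) (hΔ2n : Δ2 ≤ n)
    (hA : topSum ((s - n * d) / (Δ - d)) (LBDS n s Δ d)
      ≤ (D2.map (fun x => min ((s - n * d) / (Δ - d)) x)).sum)
    (hB : topSum ((s - n * d + (Δ - d) - 1) / (Δ - d)) (LBDS n s Δ d)
      ≤ (D2.map (fun x => min ((s - n * d + (Δ - d) - 1) / (Δ - d)) x)).sum) :
    ∀ k, topSum k (LBDS n s Δ d) ≤ (D2.map (fun x => min k x)).sum := by
  obtain ⟨k1, t, r, hk1def, hLB, hsh1, hsh2, hsum, hk1n, hlt, heq, hk1'⟩ :=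
    lbds_main n s Δ d hn hd h1 h2
  have hdΔ : d ≤ Δ := le_of_lt hd
  have hf : ∀ k, topSum k (LBDS n s Δ d)
      = ((List.replicate k1 Δ ++ r :: List.replicate t d).take k).sum := by
    intro k
    rw [hLB]
    exact topSum_lbds_shape t d r k1 Δ hsh1 hsh2 hdΔ k
  have hsum1 : (LBDS n s Δ d).sum = s := lbds_sum n s Δ d hn hd h1 h2
  have hgfull : ∀ k, n ≤ k → (D2.map (fun x => min k x)).sum = s := by
    intro k hk
    rw [g_full D2 k (fun y hy => le_trans (hD2ub y hy) (le_trans hΔ2n hk)), hD2sum]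
  -- the value at k1
  have hfk1 : topSum k1 (LBDS n s Δ d) = k1 * Δ := by
    rw [hf, ts1 _ _ _ _ _ (le_refl k1)]
  rw [← hk1def] at hA
  rw [hfk1] at hA
  intro k
  rcases le_or_gt k k1 with hkk1 | hkk1
  · -- k ≤ k1 : linear part
    rw [hf, ts1 _ _ _ _ _ hkk1]
    rcases Nat.eq_zero_or_pos k1 with hk10 | hk10
    · have : k = 0 := by omega
      simp [this]
    · have hconc := g_conc D2 0 k k1 (Nat.zero_le k) hkk1
      rw [Nat.sub_zero, Nat.sub_zero] at hconc
      have h3 : k * (D2.map (fun x => min k1 x)).sum ≤ k1 * (D2.map (fun x => min k x)).sum := by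
        omega
      have h4 : k1 * (k * Δ) ≤ k1 * (D2.map (fun x => min k x)).sum := by
        calc k1 * (k * Δ) = k * (k1 * Δ) := by ring
          _ ≤ k * (D2.map (fun x => min k1 x)).sum := Nat.mul_le_mul_left k hA
          _ ≤ _ := h3
      exact Nat.le_of_mul_le_mul_left h4 hk10
  · rcases le_or_gt n k with hnk | hnk
    · -- k ≥ n : everything
      exact le_trans (topSum_le_sum k _) (le_of_eq (hsum1.trans (hgfull k hnk).symm))
    · -- k1 < k < n
      have hkn : k1 < n := lt_trans hkk1 hnk
      obtain ⟨hcard, hdr⟩ := hlt hkn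
      have hfk : topSum k (LBDS n s Δ d) = k1 * Δ + r + (k - k1 - 1) * d := by
        rw [hf, ts2 _ _ _ _ _ hkk1 (by omega)]
      rcases hk1' with ⟨hK, hKr⟩ | ⟨hK, -⟩
      · -- K' = k1, r = d
        have hr : r = d := by
          rcases hKr with h | h
          · omega
          · exact h
        rw [hK] at hB
        -- apply chord with a := k1, b := n, j := k - k1, p := n - k
        have hconc := g_conc D2 k1 k n (le_of_lt hkk1) (le_of_lt hnk)
        rw [hgfull n (le_refl n)] at hconc
        rw [show n - k1 = (k - k1) + (n - k) by omega] at hconc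
        have hfk' : topSum k (LBDS n s Δ d) = k1 * Δ + (k - k1) * d := by
          have e1 : (k - k1) * d = (k - k1 - 1) * d + d := by
            obtain ⟨j, hj⟩ : ∃ j, k - k1 - 1 = j := ⟨_, rfl⟩
            rw [hj, show k - k1 = j + 1 by omega, Nat.succ_mul]
          rw [hfk, hr]
          omega
        have hs' : k1 * Δ + ((k - k1) + (n - k)) * d = s := by
          rw [show (k - k1) + (n - k) = 1 + t by omega, Nat.add_mul, one_mul]
          rw [hr] at hsum
          omega
        rw [hfk']
        exact chord_cancel (k1 * Δ) d (k - k1) (n - k) _ _ _ hA (le_of_eq hs') (by omega) hconc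
      · -- K' = k1 + 1
        have hkK : k1 + 1 ≤ k := hkk1
        rw [hK] at hB
        have hfK : topSum (k1 + 1) (LBDS n s Δ d) = k1 * Δ + r := by
          rw [hf, ts2 _ _ _ _ _ (Nat.lt_succ_self k1) (by omega),
            show k1 + 1 - k1 - 1 = 0 by omega, Nat.zero_mul, Nat.add_zero]
        rw [hfK] at hB
        have hconc := g_conc D2 (k1 + 1) k n hkK (le_of_lt hnk)
        rw [hgfull n (le_refl n)] at hconc
        rw [show k - (k1 + 1) = k - k1 - 1 by omega,
          show n - (k1 + 1) = (k - k1 - 1) + (n - k) by omega] at hconc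
        have hs' : (k1 * Δ + r) + ((k - k1 - 1) + (n - k)) * d = s := by
          rw [show (k - k1 - 1) + (n - k) = t by omega]
          omega
        rw [hfk]
        have := chord_cancel (k1 * Δ + r) d (k - k1 - 1) (n - k) _ _ _ hB (le_of_eq hs')
          (by omega) hconc
        omega

end GR10

/-- The pair of least balanced degree sequences is bigraphic iff the Gale–Ryser
inequalities hold for `k = ⌊(s - n1·d1)/(Δ1 - d1)⌋` and `k = ⌈(s - n1·d1)/(Δ1 - d1)⌉`. -/
theorem stmt10 (n1 n2 s d1 Δ1 d2 Δ2 : ℕ) (hn1 : 0 < n1) (hn2 : 0 < n2)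
    (hd1 : d1 < Δ1) (hd2 : d2 < Δ2)
    (hs1 : n1 * d1 ≤ s) (hs1' : s ≤ n1 * Δ1)
    (hs2 : n2 * d2 ≤ s) (hs2' : s ≤ n2 * Δ2)
    (hΔ1 : Δ1 ≤ n2) (hΔ2 : Δ2 ≤ n1) :
    BigraphicM (LBDS n1 s Δ1 d1) (LBDS n2 s Δ2 d2) ↔
      (GaleRyserIneq (LBDS n1 s Δ1 d1) (LBDS n2 s Δ2 d2) ((s - n1 * d1) / (Δ1 - d1)) ∧
       GaleRyserIneq (LBDS n1 s Δ1 d1) (LBDS n2 s Δ2 d2)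
         ((s - n1 * d1 + (Δ1 - d1) - 1) / (Δ1 - d1))) := by
  constructor
  · intro h
    exact ⟨GR10.necessity h _, GR10.necessity h _⟩
  · rintro ⟨hA, hB⟩
    have hsum : (LBDS n1 s Δ1 d1).sum = (LBDS n2 s Δ2 d2).sum := by
      rw [GR10.lbds_sum n1 s Δ1 d1 hn1 hd1 hs1 hs1', GR10.lbds_sum n2 s Δ2 d2 hn2 hd2 hs2 hs2']
    exact GR10.sufficiency hsum
      (GR10.lbds_reduce n1 s Δ1 d1 Δ2 hn1 hd1 hs1 hs1' _
        (GR10.lbds_sum n2 s Δ2 d2 hn2 hd2 hs2 hs2')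
        (GR10.lbds_ub n2 s Δ2 d2 hn2 hd2 hs2 hs2') hΔ2 hA hB)
end

section
/- Let c1 and c2 be real numbers with 0 ≤ c1 ≤ c2 ≤ (√(c1(c1+4)) − c1)/2, let n be a positive integer, and let D1 and D2 be finite sequences of nonnegative integers with |D1| + |D2| = n such that the sum of the entries of D1 equals the sum of the entries of D2 and every entry of D1 and of D2 lies in the interval [c1·n, c2·n]. Then (D1, D2) is bigraphic. -/
open Finset Function

variable {α β : Type*}

def GaleRyserCondition [Fintype β] (d : α → ℕ) (e : β → ℕ) : Prop :=
  ∀ X : Finset α, ∑ i ∈ X, d i ≤ ∑ j, min (e j) #X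

def HasDegrees [DecidableEq α] [DecidableEq β] (E : Finset (α × β)) (d : α → ℕ) (e : β → ℕ) :
    Prop :=
  (∀ i, #{p ∈ E | p.1 = i} = d i) ∧ ∀ j, #{p ∈ E | p.2 = j} = e j

section TopSet

variable [Fintype β] {e : β → ℕ}

lemma sum_min_succ (e : β → ℕ) (k : ℕ) :
    ∑ j, min (e j) (k + 1) = ∑ j, min (e j) k + #{j | k < e j} := by
  rw [card_filter, ← sum_add_distrib]
  refine sum_congr rfl fun j _ => ?_
  split_ifs <;> omega

variable [DecidableEq β] {J : Finset β}

lemma exists_card_eq_forall_le (f : β → ℕ) {m : ℕ} (hm : m ≤ Fintype.card β) :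
    ∃ J : Finset β, #J = m ∧ ∀ i ∈ J, ∀ j ∉ J, f j ≤ f i := by
  induction m with
  | zero => exact ⟨∅, card_empty, by simp⟩
  | succ m ih =>
    obtain ⟨J, hJ, htop⟩ := ih (by omega)
    have hne : Jᶜ.Nonempty := by
      rw [← card_pos, card_compl]; omega
    obtain ⟨j₀, hj₀, hmax⟩ := exists_max_image Jᶜ f hne
    rw [mem_compl] at hj₀
    refine ⟨insert j₀ J, by rw [card_insert_of_notMem hj₀, hJ], ?_⟩
    intro i hi j hj
    rw [mem_insert, not_or] at hj
    rcases mem_insert.1 hi with rfl | hi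
    · exact hmax j (mem_compl.2 hj.2)
    · exact htop i hi j hj.2

lemma forall_lt_or_card_add_card_le (htop : ∀ i ∈ J, ∀ j ∉ J, e j ≤ e i) (k : ℕ) :
    (∀ j ∈ J, k < e j) ∨ #{j | k < e j} + #{j ∈ J | e j ≤ k} ≤ #J := by
  by_contra! ⟨⟨j₀, hj₀, hj₀k⟩, hcard⟩
  have hsub : ({j | k < e j} : Finset β) ⊆ {j ∈ J | ¬e j ≤ k} := by
    intro j hj
    simp only [mem_filter, mem_univ, true_and] at hj ⊢
    refine ⟨?_, by omega⟩
    by_contra hjJ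
    have := htop j₀ hj₀ j hjJ
    omega
  have := card_le_card hsub
  have := card_filter_add_card_filter_not (s := J) (fun j => e j ≤ k)
  omega

lemma sum_min_eq_sum_min_pred_add (hpos : ∀ j ∈ J, 1 ≤ e j) (k : ℕ) :
    ∑ j, min (e j) k = ∑ j, min (if j ∈ J then e j - 1 else e j) k + #{j ∈ J | e j ≤ k} := by
  have hJk : {j ∈ J | e j ≤ k} = ({j | j ∈ J ∧ e j ≤ k} : Finset β) := by ext; simp
  rw [hJk, card_filter, ← sum_add_distrib]
  refine sum_congr rfl fun j _ => ?_
  by_cases hj : j ∈ J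
  · have := hpos j hj
    simp only [hj, if_true, true_and]
    split_ifs <;> omega
  · simp [hj]

lemma sum_pred_add_card (hpos : ∀ j ∈ J, 1 ≤ e j) :
    ∑ j, (if j ∈ J then e j - 1 else e j) + #J = ∑ j, e j := by
  have hJ : #J = ∑ j, if j ∈ J then 1 else 0 := by
    rw [sum_ite_mem, univ_inter, card_eq_sum_ones]
  rw [hJ, ← sum_add_distrib]
  refine sum_congr rfl fun j _ => ?_
  by_cases hj : j ∈ J
  · have := hpos j hj
    simp only [hj, if_true]
    omega
  · simp [hj]

end TopSet

section Construction

lemma card_filter_fst_singleton_product [DecidableEq α] {i₀ : α} {J : Finset β} (i : α) :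
    #{p ∈ {i₀} ×ˢ J | p.1 = i} = if i = i₀ then #J else 0 := by
  rw [filter_product_left (fun a => a = i), card_product, filter_singleton]
  split_ifs <;> simp_all

lemma card_filter_snd_singleton_product [DecidableEq β] {i₀ : α} {J : Finset β} (j : β) :
    #{p ∈ {i₀} ×ˢ J | p.2 = j} = if j ∈ J then 1 else 0 := by
  rw [filter_product_right (fun b => b = j), filter_eq']
  split_ifs <;> simp

variable [DecidableEq α] [DecidableEq β] {d : α → ℕ} {e : β → ℕ} {i₀ : α} {J : Finset β}

theorem GaleRyserCondition.update_zero [Fintype β] (h : GaleRyserCondition d e)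
    (hJ : #J = d i₀) (htop : ∀ i ∈ J, ∀ j ∉ J, e j ≤ e i) (hpos : ∀ j ∈ J, 1 ≤ e j) :
    GaleRyserCondition (update d i₀ 0) (fun j => if j ∈ J then e j - 1 else e j) := by
  intro X
  -- The condition at `X.erase i₀` suffices unless a column of `J` has degree `≤ #(X.erase i₀)`;
  -- then so do all columns outside `J`, and the condition at `insert i₀ (X.erase i₀)` suffices.
  have hi₀ := notMem_erase i₀ X
  have hY := h (X.erase i₀)
  have hinsY := h (insert i₀ (X.erase i₀))
  rw [sum_insert hi₀, card_insert_of_notMem hi₀, sum_min_succ,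
    sum_min_eq_sum_min_pred_add hpos] at hinsY
  rw [sum_min_eq_sum_min_pred_add hpos] at hY
  calc ∑ i ∈ X, update d i₀ 0 i = ∑ i ∈ X.erase i₀, d i := by
        rw [← sum_erase X (update_self i₀ 0 d)]
        exact sum_congr rfl fun i hi => update_of_ne (ne_of_mem_erase hi) 0 d
    _ ≤ ∑ j, min (if j ∈ J then e j - 1 else e j) #(X.erase i₀) := by
      rcases forall_lt_or_card_add_card_le htop #(X.erase i₀) with hlt | hle
      · have : #{j ∈ J | e j ≤ #(X.erase i₀)} = 0 := by
          rw [card_eq_zero, filter_eq_empty_iff]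
          exact fun j hj => not_le.2 (hlt j hj)
        omega
      · omega
    _ ≤ ∑ j, min (if j ∈ J then e j - 1 else e j) #X :=
      sum_le_sum fun j _ => min_le_min_left _ card_erase_le

lemma HasDegrees.union_singleton_product {E : Finset (α × β)}
    (hE : HasDegrees E (update d i₀ 0) (fun j => if j ∈ J then e j - 1 else e j))
    (hJ : #J = d i₀) (hpos : ∀ j ∈ J, 1 ≤ e j) :
    HasDegrees (E ∪ {i₀} ×ˢ J) d e := by
  have hdisj : Disjoint E ({i₀} ×ˢ J) := by
    rw [disjoint_left]
    intro p hp hpJ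
    have hrow : #{p ∈ E | p.1 = i₀} = 0 := by rw [hE.1]; simp
    rw [card_eq_zero, filter_eq_empty_iff] at hrow
    exact hrow hp (mem_singleton.1 (mem_product.1 hpJ).1)
  refine ⟨fun i => ?_, fun j => ?_⟩
  · rw [filter_union, card_union_of_disjoint (disjoint_filter_filter hdisj), hE.1,
      card_filter_fst_singleton_product]
    by_cases hi : i = i₀
    · simp [hi, hJ]
    · simp [hi]
  · rw [filter_union, card_union_of_disjoint (disjoint_filter_filter hdisj), hE.2,
      card_filter_snd_singleton_product]
    by_cases hj : j ∈ J
    · have := hpos j hj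
      simp only [hj, if_true]
      omega
    · simp [hj]

theorem GaleRyserCondition.exists_hasDegrees [Fintype α] [Fintype β]
    (h : GaleRyserCondition d e) (hsum : ∑ i, d i = ∑ j, e j) : ∃ E, HasDegrees E d e := by
  induction hN : ∑ i, d i using Nat.strong_induction_on generalizing d e with
  | _ N ih =>
  by_cases hzero : ∀ i, d i = 0
  · have he : ∀ j, e j = 0 := fun j =>
      sum_eq_zero_iff.1 (hsum ▸ sum_eq_zero fun i _ => hzero i) j (mem_univ j)
    exact ⟨∅, fun i => by simp [hzero i], fun j => by simp [he j]⟩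
  push Not at hzero
  obtain ⟨i₀, hi₀⟩ := hzero
  have hcount : d i₀ ≤ #{j | 0 < e j} := by simpa [sum_min_succ] using h {i₀}
  obtain ⟨J, hJ, htop⟩ := exists_card_eq_forall_le e (hcount.trans (card_le_univ _))
  have hpos : ∀ j ∈ J, 1 ≤ e j := by
    rcases forall_lt_or_card_add_card_le htop 0 with hlt | hle
    · exact hlt
    · intro j hj
      by_contra! h0
      have : 0 < #{j ∈ J | e j ≤ 0} := card_pos.2 ⟨j, mem_filter.2 ⟨hj, by omega⟩⟩
      omega
  have hrow_sum := sum_update_of_mem (mem_univ i₀) d 0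
  have hcol_sum := sum_pred_add_card hpos
  rw [hJ, ← hsum, sum_eq_add_sum_sdiff_singleton_of_mem (mem_univ i₀)] at hcol_sum
  rw [sum_eq_add_sum_sdiff_singleton_of_mem (mem_univ i₀)] at hN
  obtain ⟨E, hE⟩ := ih _ (by omega) (h.update_zero hJ htop hpos) (by omega) rfl
  exact ⟨_, hE.union_singleton_product hJ hpos⟩

end Construction

/- With `u = K - M₁` and `v = M₂ - K`, the difference of the two sides is
`M₁ (B - M₂) v + M₁ (A - M₂) u - (M₂ - M₁) u v`, which `hM` bounds below by
`(M₂ - M₁) (min u v) (M₂ - max u v)`. -/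
lemma middle_range_inequality {M₁ M₂ A B K : ℝ} (hM₁ : 0 ≤ M₁) (hM : M₂ * (M₁ + M₂) ≤ M₁ * (A + B))
    (hA : M₂ ≤ A) (hB : M₂ ≤ B) (hK₁ : M₁ ≤ K) (hK₂ : K ≤ M₂) :
    (M₂ - K) * (K * M₂ - B * M₁) ≤ M₁ * (A - K) * (K - M₁) := by
  have hM₁₂ : 0 ≤ M₂ - M₁ := by linarith
  have hexcess : 0 ≤ M₁ * (A + B) - M₂ * (M₁ + M₂) := by linarith
  rcases le_total (2 * K) (M₁ + M₂) with h | h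
  · nlinarith [mul_nonneg (mul_nonneg hM₁ (sub_nonneg.2 hB)) (by linarith : 0 ≤ M₁ + M₂ - 2 * K),
      mul_nonneg (sub_nonneg.2 hK₁) hexcess,
      mul_nonneg (mul_nonneg hM₁₂ (sub_nonneg.2 hK₁)) (hM₁.trans hK₁)]
  · nlinarith [mul_nonneg (mul_nonneg hM₁ (sub_nonneg.2 hA)) (by linarith : 0 ≤ 2 * K - M₁ - M₂),
      mul_nonneg (sub_nonneg.2 hK₂) hexcess,
      mul_nonneg (mul_nonneg hM₁₂ (sub_nonneg.2 hK₂)) (by linarith : 0 ≤ M₂ - K + M₁)]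

lemma le_of_mul_le_of_mul_add_le {M₁ M₂ A B : ℝ} (hM₁ : 0 ≤ M₁) (hB : 0 ≤ B)
    (hAB : A * M₁ ≤ B * M₂) (hM : M₂ * (M₁ + M₂) ≤ M₁ * (A + B)) : M₂ ≤ B := by
  by_contra! h
  nlinarith [mul_pos (sub_pos.2 h) (by linarith : 0 < M₁ + M₂)]

lemma chord_le_mul_min {M₁ M₂ K x : ℝ} (hK : K ∈ Set.Icc M₁ M₂) (hx : x ∈ Set.Icc M₁ M₂) :
    (M₂ - K) * M₁ + (K - M₁) * x ≤ (M₂ - M₁) * min x K := by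
  obtain ⟨hK₁, hK₂⟩ := hK
  obtain ⟨hx₁, hx₂⟩ := hx
  rcases le_total x K with h | h
  · rw [min_eq_left h]; nlinarith
  · rw [min_eq_right h]; nlinarith

variable [Fintype α] [Fintype β]

lemma sum_chord_le_mul_sum_min {e : β → ℝ} {M₁ M₂ K : ℝ} (hK : K ∈ Set.Icc M₁ M₂)
    (he : ∀ j, e j ∈ Set.Icc M₁ M₂) :
    (M₂ - K) * (Fintype.card β * M₁) + (K - M₁) * ∑ j, e j ≤ (M₂ - M₁) * ∑ j, min (e j) K :=
  calc (M₂ - K) * (Fintype.card β * M₁) + (K - M₁) * ∑ j, e j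
      = ∑ j, ((M₂ - K) * M₁ + (K - M₁) * e j) := by
        simp only [sum_add_distrib, ← mul_sum, sum_const, card_univ, nsmul_eq_mul]
    _ ≤ ∑ j, (M₂ - M₁) * min (e j) K := sum_le_sum fun j _ => chord_le_mul_min hK (he j)
    _ = (M₂ - M₁) * ∑ j, min (e j) K := (mul_sum _ _ _).symm

lemma sum_le_sum_min_of_forall_mem_Icc {d : α → ℝ} {e : β → ℝ} {M₁ M₂ : ℝ} (hM₁ : 0 ≤ M₁)
    (hM : M₂ * (M₁ + M₂) ≤ M₁ * (Fintype.card α + Fintype.card β))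
    (hsum : ∑ i, d i = ∑ j, e j) (hd : ∀ i, d i ∈ Set.Icc M₁ M₂) (he : ∀ j, e j ∈ Set.Icc M₁ M₂)
    (X : Finset α) : ∑ i ∈ X, d i ≤ ∑ j, min (e j) (#X : ℝ) := by
  classical
  set A : ℝ := (Fintype.card α : ℝ)
  set B : ℝ := (Fintype.card β : ℝ)
  set K : ℝ := (#X : ℝ)
  set S := ∑ j, e j
  have hSA₁ : A * M₁ ≤ S := by
    simpa [hsum] using card_nsmul_le_sum univ d M₁ fun i _ => (hd i).1
  have hSB₂ : S ≤ B * M₂ := by simpa using sum_le_card_nsmul univ e M₂ fun j _ => (he j).2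
  have hSB₁ : B * M₁ ≤ S := by simpa using card_nsmul_le_sum univ e M₁ fun j _ => (he j).1
  have hSA₂ : S ≤ A * M₂ := by
    simpa [hsum] using sum_le_card_nsmul univ d M₂ fun i _ => (hd i).2
  have hB : M₂ ≤ B := le_of_mul_le_of_mul_add_le hM₁ (by positivity) (hSA₁.trans hSB₂) hM
  have hA : M₂ ≤ A :=
    le_of_mul_le_of_mul_add_le hM₁ (by positivity) (hSB₁.trans hSA₂) (by linarith)
  have hKA : K ≤ A := by simpa only [K, A, Nat.cast_le] using card_le_univ X
  have hXK : ∑ i ∈ X, d i ≤ K * M₂ := by simpa using sum_le_card_nsmul X d M₂ fun i _ => (hd i).2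
  have hXS : ∑ i ∈ X, d i + (A - K) * M₁ ≤ S := by
    have hXc := card_nsmul_le_sum Xᶜ d M₁ fun i _ => (hd i).1
    rw [nsmul_eq_mul, card_compl, Nat.cast_sub (card_le_univ X)] at hXc
    rw [← hsum, ← sum_add_sum_compl X d]
    linarith
  rcases le_or_gt K M₁ with hK₁ | hK₁
  · calc ∑ i ∈ X, d i ≤ K * M₂ := hXK
      _ ≤ K * B := by gcongr
      _ = ∑ j, min (e j) K := by
        rw [sum_congr rfl fun j _ => min_eq_right (hK₁.trans (he j).1)]
        simp [B, mul_comm]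
  rcases le_or_gt M₂ K with hK₂ | hK₂
  · calc ∑ i ∈ X, d i ≤ S := by nlinarith [mul_nonneg (sub_nonneg.2 hKA) hM₁]
      _ = ∑ j, min (e j) K := sum_congr rfl fun j _ => (min_eq_left ((he j).2.trans hK₂)).symm
  have hchord := sum_chord_le_mul_sum_min ⟨hK₁.le, hK₂.le⟩ he
  have hmid := middle_range_inequality hM₁ hM hA hB hK₁.le hK₂.le
  refine le_of_mul_le_mul_left ?_ (by linarith : 0 < M₂ - M₁)
  nlinarith [mul_le_mul_of_nonneg_left hXK (by linarith : 0 ≤ M₂ - K),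
    mul_le_mul_of_nonneg_left hXS (by linarith : 0 ≤ K - M₁)]

lemma galeRyserCondition_of_forall_mem_Icc {d : α → ℕ} {e : β → ℕ} {M₁ M₂ : ℝ} (hM₁ : 0 ≤ M₁)
    (hM : M₂ * (M₁ + M₂) ≤ M₁ * (Fintype.card α + Fintype.card β)) (hsum : ∑ i, d i = ∑ j, e j)
    (hd : ∀ i, (d i : ℝ) ∈ Set.Icc M₁ M₂) (he : ∀ j, (e j : ℝ) ∈ Set.Icc M₁ M₂) :
    GaleRyserCondition d e := fun X => by
  exact_mod_cast sum_le_sum_min_of_forall_mem_Icc hM₁ hM (by exact_mod_cast hsum) hd he X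

lemma Multiset.exists_univ_val_map_eq {γ : Type*} (s : Multiset γ) :
    ∃ f : Fin (Multiset.card s) → γ, univ.val.map f = s :=
  Quot.inductionOn s fun l =>
    ⟨l.get, (Fin.univ_val_map l.get).trans (congrArg _ (List.ofFn_get l))⟩

lemma mul_add_le_of_le_sqrt_sub {c₁ c₂ : ℝ} (h₀ : 0 ≤ c₁) (h₁₂ : c₁ ≤ c₂)
    (h₂ : c₂ ≤ (Real.sqrt (c₁ * (c₁ + 4)) - c₁) / 2) : c₂ * (c₁ + c₂) ≤ c₁ := by
  have hsq : (2 * c₂ + c₁) ^ 2 ≤ c₁ * (c₁ + 4) := by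
    rw [← Real.sq_sqrt (by positivity : 0 ≤ c₁ * (c₁ + 4))]
    exact pow_le_pow_left₀ (by linarith) (by linarith) 2
  nlinarith

theorem stmt12_general (c1 c2 : ℝ) (h0 : 0 ≤ c1) (h12 : c1 ≤ c2)
    (h2 : c2 ≤ (Real.sqrt (c1 * (c1 + 4)) - c1) / 2)
    (n : ℕ) (D1 D2 : Multiset ℕ)
    (hcard : Multiset.card D1 + Multiset.card D2 = n)
    (hsum : D1.sum = D2.sum)
    (hb1 : ∀ d ∈ D1, c1 * n ≤ (d : ℝ) ∧ (d : ℝ) ≤ c2 * n)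
    (hb2 : ∀ d ∈ D2, c1 * n ≤ (d : ℝ) ∧ (d : ℝ) ≤ c2 * n) :
    BigraphicM D1 D2 := by
  obtain ⟨d, hd⟩ := D1.exists_univ_val_map_eq
  obtain ⟨e, he⟩ := D2.exists_univ_val_map_eq
  have hc := mul_add_le_of_le_sqrt_sub h0 h12 h2
  have hsum' : ∑ i, d i = ∑ j, e j := by
    rw [Finset.sum_eq_multiset_sum, Finset.sum_eq_multiset_sum, hd, he, hsum]
  have hGR : GaleRyserCondition d e := by
    refine galeRyserCondition_of_forall_mem_Icc (by positivity) ?_ hsum'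
      (fun i => hb1 _ (hd ▸ Multiset.mem_map_of_mem _ (mem_univ i)))
      (fun j => hb2 _ (he ▸ Multiset.mem_map_of_mem _ (mem_univ j)))
    rw [Fintype.card_fin, Fintype.card_fin, ← Nat.cast_add, hcard]
    nlinarith [sq_nonneg (n : ℝ)]
  obtain ⟨E, hrow, hcol⟩ := hGR.exists_hasDegrees hsum'
  exact ⟨E, by simp only [hrow, hd], by simp only [hcol, he]⟩

/-- If `0 ≤ c1 ≤ c2 ≤ (√(c1(c1+4)) - c1)/2` and `D1`, `D2` are degree sequences of
total length `n` with equal sums, all of whose entries lie in `[c1·n, c2·n]`, then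
`(D1, D2)` is bigraphic. -/
theorem stmt12 (c1 c2 : ℝ) (h0 : 0 ≤ c1) (h12 : c1 ≤ c2)
    (h2 : c2 ≤ (Real.sqrt (c1 * (c1 + 4)) - c1) / 2)
    (n : ℕ) (hn : 0 < n) (D1 D2 : Multiset ℕ)
    (hcard : Multiset.card D1 + Multiset.card D2 = n)
    (hsum : D1.sum = D2.sum)
    (hb1 : ∀ d ∈ D1, c1 * n ≤ (d : ℝ) ∧ (d : ℝ) ≤ c2 * n)
    (hb2 : ∀ d ∈ D2, c1 * n ≤ (d : ℝ) ∧ (d : ℝ) ≤ c2 * n) :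
    BigraphicM D1 D2 :=
  stmt12_general c1 c2 h0 h12 h2 n D1 D2 hcard hsum hb1 hb2
end

section
/- Let D be a graphic sequence of nonnegative integers with entry sum S such that exactly one entry of D equals S/2 and every other entry is strictly less than S/2. Then D has a bipartite realization. -/
/-- A degree sequence has a bipartite realization iff its entries can be split into two
multisets forming a bigraphic pair. -/
def HasBipartiteRealization (D : Multiset ℕ) : Prop :=
  ∃ D1 D2 : Multiset ℕ, D1 + D2 = D ∧ BigraphicM D1 D2

open scoped Classical in
/-- A degree sequence is *graphic* if it is the degree multiset of a simple graph. -/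
def Graphic (D : Multiset ℕ) : Prop :=
  ∃ G : SimpleGraph (Fin (Multiset.card D)),
    D = Finset.univ.val.map (fun v => (Finset.univ.filter (fun w => G.Adj v w)).card)

/-! A vertex whose degree is half the degree sum has degree equal to the number of edges, so
every edge is incident with it: the graph is a star together with isolated vertices. A star
is bipartite, with the centre on one side and all other vertices, of degree at most one, on
the other. -/

open Finset

theorem bigraphicM_singleton_sum_of_forall_le_one {R : Multiset ℕ} (hR : ∀ x ∈ R, x ≤ 1) :
    BigraphicM {R.sum} R := by
  classical
  obtain ⟨l, rfl⟩ : ∃ l : List ℕ, ↑l = R := ⟨R.toList, R.coe_toList⟩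
  rw [Multiset.sum_coe]
  show ∃ E : Finset (Fin 1 × Fin l.length),
    {l.sum} = univ.val.map (fun u => #(E.filter (·.1 = u))) ∧
    (l : Multiset ℕ) = univ.val.map (fun v => #(E.filter (·.2 = v)))
  set S : Finset (Fin l.length) := univ.filter (fun i => l[i.1] = 1)
  have hget : ∀ i : Fin l.length, l[i.1] = if l[i.1] = 1 then 1 else 0 := by
    intro i
    have := hR _ (List.getElem_mem i.2)
    split_ifs <;> omega
  refine ⟨univ ×ˢ S, ?_, ?_⟩
  · have hsum : l.sum = #S := by
      rw [← Fin.sum_univ_getElem, card_eq_sum_ones, sum_filter]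
      exact sum_congr rfl fun i _ => hget i
    have hcenter (u : Fin 1) : (univ ×ˢ S).filter (fun p => p.1 = u) = univ ×ˢ S :=
      filter_true_of_mem fun p _ => Subsingleton.elim _ _
    simp only [hcenter, card_product, card_univ, Fintype.card_fin, one_mul, hsum]
    rfl
  · have hleaf (v : Fin l.length) :
        #((univ ×ˢ S).filter (fun p : Fin 1 × _ => p.2 = v)) = l[v.1] := by
      rw [filter_product_right (· = v), card_product, hget]
      simp [filter_eq', S, apply_ite card]
    rw [Fin.univ_val_map]
    congr 1
    exact List.ext_getElem (by simp) fun i _ _ => by simp only [List.getElem_ofFn, hleaf]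

namespace SimpleGraph

variable {V : Type*} [Fintype V] [DecidableEq V] (G : SimpleGraph V) [DecidableRel G.Adj]

theorem degree_le_one_of_degree_eq_card_edgeFinset {v w : V}
    (hv : G.degree v = #G.edgeFinset) (hw : w ≠ v) : G.degree w ≤ 1 := by
  have hinc : G.incidenceFinset v = G.edgeFinset :=
    eq_of_subset_of_card_le (G.incidenceFinset_subset v)
      (by rw [card_incidenceFinset_eq_degree, hv])
  have hnbr : G.neighborFinset w ⊆ {v} := by
    intro x hx
    have hwx : s(w, x) ∈ G.incidenceFinset v :=
      hinc ▸ G.mem_edgeFinset.mpr ((G.mem_neighborFinset w x).mp hx)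
    rcases Sym2.mem_iff.mp ((G.mem_incidenceFinset v _).mp hwx).2 with h | h
    · exact absurd h.symm hw
    · exact mem_singleton.mpr h.symm
  simpa using card_le_card hnbr

theorem hasBipartiteRealization_degrees_of_degree_eq_card_edgeFinset {v : V}
    (hv : G.degree v = #G.edgeFinset) :
    HasBipartiteRealization (univ.val.map fun w => G.degree w) := by
  set R := (univ.erase v).val.map fun w => G.degree w
  have hsplit : univ.val.map (fun w => G.degree w) = G.degree v ::ₘ R := by
    simp only [R, erase_val]
    rw [← Multiset.map_cons (fun w => G.degree w),
      Multiset.cons_erase (mem_val.mpr (mem_univ v))]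
  have hR : ∀ x ∈ R, x ≤ 1 := by
    simp only [R, Multiset.mem_map, mem_val, mem_erase]
    rintro _ ⟨w, ⟨hw, -⟩, rfl⟩
    exact G.degree_le_one_of_degree_eq_card_edgeFinset hv hw
  have hRsum : R.sum = G.degree v := by
    have := G.sum_degrees_eq_twice_card_edges
    rw [← sum_erase_add _ _ (mem_univ v)] at this
    change R.sum + _ = _ at this
    omega
  exact ⟨{G.degree v}, R, by rw [hsplit, Multiset.singleton_add],
    hRsum ▸ bigraphicM_singleton_sum_of_forall_le_one hR⟩

end SimpleGraph

theorem stmt15_general (D : Multiset ℕ) (hg : Graphic D)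
    (hone : Multiset.card (D.filter (fun d => 2 * d = D.sum)) = 1) :
    HasBipartiteRealization D := by
  classical
  obtain ⟨G, hD⟩ := hg
  simp only [← SimpleGraph.neighborFinset_eq_filter,
    SimpleGraph.card_neighborFinset_eq_degree] at hD
  obtain ⟨a, ha⟩ := Multiset.card_eq_one.mp hone
  obtain ⟨haD, hahalf⟩ := Multiset.mem_filter.mp (ha ▸ Multiset.mem_singleton_self a)
  rw [hD] at haD hahalf ⊢
  obtain ⟨v, -, rfl⟩ := Multiset.mem_map.mp haD
  rw [sum_map_val, G.sum_degrees_eq_twice_card_edges] at hahalf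
  exact G.hasBipartiteRealization_degrees_of_degree_eq_card_edgeFinset (v := v) (by omega)

/-- A graphic sequence with exactly one entry equal to half the degree sum and every
other entry strictly smaller has a bipartite realization. -/
theorem stmt15 (D : Multiset ℕ) (hg : Graphic D)
    (hone : Multiset.card (D.filter (fun d => 2 * d = D.sum)) = 1)
    (hle : ∀ d ∈ D, 2 * d ≤ D.sum) :
    HasBipartiteRealization D :=
  stmt15_general D hg hone
end

section
/- Let D be a finite sequence of positive integers with entry sum S. If D contains an entry strictly greater than S/2, or if D contains at least two entries equal to S/2 and D is not the sequence (1, 1), then D has no bipartite realization. -/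
namespace Multiset

theorem eq_singleton_of_mem_of_sum_eq {M : Multiset ℕ} {c : ℕ} (hpos : ∀ d ∈ M, 0 < d)
    (hc : c ∈ M) (hsum : M.sum = c) : M = {c} := by
  obtain ⟨M', rfl⟩ := exists_cons_of_mem hc
  have hM' : M' = 0 := by
    refine eq_zero_of_forall_notMem fun x hx => ?_
    have hx_pos := hpos x (mem_cons_of_mem hx)
    have hx_le := le_sum_of_mem hx
    rw [sum_cons] at hsum
    omega
  rw [hM', cons_zero]

theorem card_filter_eq_sum_le_one {M : Multiset ℕ} (hpos : ∀ d ∈ M, 0 < d) :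
    card (M.filter (· = M.sum)) ≤ 1 := by
  by_cases hmem : M.sum ∈ M
  · calc card (M.filter (· = M.sum)) ≤ card M := card_le_card (filter_le _ _)
      _ = 1 := by rw [eq_singleton_of_mem_of_sum_eq hpos hmem rfl, card_singleton]
  · rw [filter_eq_nil.2 fun d hd (hd_eq : d = M.sum) => hmem (hd_eq ▸ hd), card_zero]
    exact zero_le_one

theorem eq_singleton_sum_of_card_filter_pos {M : Multiset ℕ} (hpos : ∀ d ∈ M, 0 < d)
    (h : 0 < card (M.filter (· = M.sum))) : M = {M.sum} := by
  obtain ⟨d, hd⟩ := card_pos_iff_exists_mem.1 h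
  obtain ⟨hdM, rfl⟩ := mem_filter.1 hd
  exact eq_singleton_of_mem_of_sum_eq hpos hdM rfl

end Multiset

theorem Finset.sum_card_filter_fst_eq {α β : Type*} [Fintype α] [DecidableEq α]
    (E : Finset (α × β)) :
    (Finset.univ.val.map fun u => (E.filter fun p => p.1 = u).card).sum = E.card :=
  (Finset.card_eq_sum_card_fiberwise fun p _ => Finset.mem_univ p.1).symm

theorem Finset.sum_card_filter_snd_eq {α β : Type*} [Fintype β] [DecidableEq β]
    (E : Finset (α × β)) :
    (Finset.univ.val.map fun v => (E.filter fun p => p.2 = v).card).sum = E.card :=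
  (Finset.card_eq_sum_card_fiberwise fun p _ => Finset.mem_univ p.2).symm

namespace BigraphicM

variable {D1 D2 : Multiset ℕ}

theorem sum_eq_card_edges (hG : BigraphicM D1 D2) :
    ∃ E : Finset (Fin (Multiset.card D1) × Fin (Multiset.card D2)),
      D1.sum = E.card ∧ D2.sum = E.card := by
  obtain ⟨E, h1, h2⟩ := hG
  exact ⟨E, (congrArg Multiset.sum h1).trans (Finset.sum_card_filter_fst_eq E),
    (congrArg Multiset.sum h2).trans (Finset.sum_card_filter_snd_eq E)⟩

theorem sum_left_eq_sum_right (hG : BigraphicM D1 D2) : D1.sum = D2.sum := by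
  obtain ⟨E, h1, h2⟩ := hG.sum_eq_card_edges
  rw [h1, h2]

theorem sum_le_card_mul_card (hG : BigraphicM D1 D2) :
    D1.sum ≤ Multiset.card D1 * Multiset.card D2 := by
  obtain ⟨E, h1, -⟩ := hG.sum_eq_card_edges
  simpa [h1] using Finset.card_le_univ E

theorem le_sum_left_of_mem (hG : BigraphicM D1 D2) {d : ℕ} (hd : d ∈ D1 + D2) :
    d ≤ D1.sum := by
  rcases Multiset.mem_add.1 hd with hd | hd
  · exact Multiset.le_sum_of_mem hd
  · exact hG.sum_left_eq_sum_right ▸ Multiset.le_sum_of_mem hd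

theorem eq_one_one_of_two_le_card_filter (hG : BigraphicM D1 D2)
    (hpos : ∀ d ∈ D1 + D2, 0 < d)
    (hcard : 2 ≤ Multiset.card ((D1 + D2).filter (· = D1.sum))) : D1 + D2 = {1, 1} := by
  have hsum := hG.sum_left_eq_sum_right
  have hpos1 : ∀ d ∈ D1, 0 < d := fun d hd => hpos d (Multiset.mem_add.2 (.inl hd))
  have hpos2 : ∀ d ∈ D2, 0 < d := fun d hd => hpos d (Multiset.mem_add.2 (.inr hd))
  have hle1 := Multiset.card_filter_eq_sum_le_one hpos1
  have hle2 := Multiset.card_filter_eq_sum_le_one hpos2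
  rw [Multiset.filter_add, Multiset.card_add] at hcard
  rw [← hsum] at hle2
  have hD1 := Multiset.eq_singleton_sum_of_card_filter_pos hpos1 (by omega)
  have hD2 := Multiset.eq_singleton_sum_of_card_filter_pos hpos2 (by rw [← hsum]; omega)
  have hc_le : D1.sum ≤ 1 := by
    have hcard1 : Multiset.card D1 = 1 := by rw [hD1, Multiset.card_singleton]
    have hcard2 : Multiset.card D2 = 1 := by rw [hD2, Multiset.card_singleton]
    simpa [hcard1, hcard2] using hG.sum_le_card_mul_card
  have hc_pos : 0 < D1.sum := hpos1 _ (hD1 ▸ Multiset.mem_singleton_self _)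
  rw [hD1, hD2, ← hsum, show D1.sum = 1 by omega]
  rfl

end BigraphicM

/-- A sequence of positive integers with an entry exceeding half the degree sum, or with
at least two entries equal to half the degree sum (other than the sequence `(1,1)`),
has no bipartite realization. -/
theorem stmt16 (D : Multiset ℕ) (hpos : ∀ d ∈ D, 0 < d)
    (h : (∃ d ∈ D, 2 * d > D.sum) ∨
      (2 ≤ Multiset.card (D.filter (fun d => 2 * d = D.sum)) ∧ D ≠ {1, 1})) :
    ¬ HasBipartiteRealization D := by
  rintro ⟨D1, D2, rfl, hG⟩
  have hS : (D1 + D2).sum = 2 * D1.sum := by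
    rw [Multiset.sum_add, ← hG.sum_left_eq_sum_right, two_mul]
  rcases h with ⟨d, hd, hgt⟩ | ⟨hcard, hne⟩
  · have := hG.le_sum_left_of_mem hd
    omega
  · refine hne (hG.eq_one_one_of_two_le_card_filter hpos ?_)
    have hfilter : (D1 + D2).filter (fun d => 2 * d = (D1 + D2).sum) =
        (D1 + D2).filter (· = D1.sum) := Multiset.filter_congr fun d _ => by omega
    rwa [hfilter] at hcard
end
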